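/- arXiv:0907.0802 — 5 statements merged into one kernel-verified Lean document; each statement's English description precedes it below -/
import Mathlib

section
/- If h : 2^ω → 2^ω is Baire measurable and constant on E₀-classes (where x E₀ y iff x(m) = y(m) for all but finitely many m), then h is constant on a comeagre subset of 2^ω. -/
open Filter Topology Set

/-- Eventual equality on Cantor space `2^ω`. -/
def E0 (x y : ℕ → Bool) : Prop := ∃ n, ∀ m ≥ n, x m = y m

private lemma xor_helper (a b : Bool) : xor (xor a b) b = a := by
  cases a <;> cases b <;> rfl

private lemma xor_helper2 (a b : Bool) : xor a (xor a b) = b := by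
  cases a <;> cases b <;> rfl

/-- Flipping coordinates by a mask is a homeomorphism of Cantor space. -/
def flipHomeo (μ : ℕ → Bool) : Homeomorph (ℕ → Bool) (ℕ → Bool) where
  toFun x := fun m => xor (x m) (μ m)
  invFun x := fun m => xor (x m) (μ m)
  left_inv x := by funext m; exact xor_helper _ _
  right_inv x := by funext m; exact xor_helper _ _
  continuous_toFun := continuous_pi fun m => by
    have : (fun x : ℕ → Bool => xor (x m) (μ m)) =
        (fun b : Bool => xor b (μ m)) ∘ (fun x : ℕ → Bool => x m) := rfl
    rw [this]
    exact continuous_of_discreteTopology.comp (continuous_apply m)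
  continuous_invFun := continuous_pi fun m => by
    have : (fun x : ℕ → Bool => xor (x m) (μ m)) =
        (fun b : Bool => xor b (μ m)) ∘ (fun x : ℕ → Bool => x m) := rfl
    rw [this]
    exact continuous_of_discreteTopology.comp (continuous_apply m)

/-- Topological zero-one law for `E0`-invariant Baire measurable sets. -/
lemma zero_one (B : Set (ℕ → Bool)) (hB : BaireMeasurableSet B)
    (hinv : ∀ x y, E0 x y → (x ∈ B ↔ y ∈ B)) :
    IsMeagre B ∨ B ∈ residual (ℕ → Bool) := by
  obtain ⟨U, hUopen, heq⟩ := hB.residualEq_isOpen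
  rcases eq_empty_or_nonempty U with rfl | ⟨a, ha⟩
  · left
    rw [IsMeagre]
    filter_upwards [heq] with x hx
    simp only [eq_iff_iff] at hx
    exact fun hxB => Set.notMem_empty x (hx.mp hxB)
  · right
    -- get a basic cylinder inside U
    obtain ⟨I, u, hu, hpi⟩ := isOpen_pi_iff.mp hUopen a ha
    set n : ℕ := (I.sup id) + 1 with hn
    have hIn : ∀ i ∈ I, i < n := fun i hi =>
      Nat.lt_succ_of_le (Finset.le_sup (f := id) hi)
    set C : (ℕ → Bool) → Set (ℕ → Bool) := fun t => {x | ∀ m < n, x m = t m} with hC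
    have hCa : C a ⊆ U := by
      intro x hx
      apply hpi
      intro i hi
      have := hx i (hIn i hi)
      rw [this]
      exact (hu i hi).2
    have hUB : IsMeagre (U \ B) := by
      rw [IsMeagre]
      filter_upwards [heq] with x hx
      simp only [eq_iff_iff] at hx
      intro ⟨hxU, hxB⟩
      exact hxB (hx.mpr hxU)
    -- for each t, C t \ B is meagre
    have key : ∀ t : ℕ → Bool, IsMeagre (C t \ B) := by
      intro t
      set μ : ℕ → Bool := fun m => if m < n then xor (t m) (a m) else false with hμ
      set g := flipHomeo μ with hg
      have hgE0 : ∀ x, E0 (g x) x := by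
        intro x
        refine ⟨n, fun m hm => ?_⟩
        show xor (x m) (μ m) = x m
        simp [hμ, Nat.not_lt_of_ge hm]
      have hsub : C t \ B ⊆ g ⁻¹' (C a \ B) := by
        intro x ⟨hxC, hxB⟩
        constructor
        · intro m hm
          show xor (x m) (μ m) = a m
          rw [hxC m hm]
          simp only [hμ, if_pos hm]
          exact xor_helper2 _ _
        · intro hgB
          exact hxB ((hinv _ _ (hgE0 x)).mp hgB)
      exact ((hUB.mono (diff_subset_diff_left hCa)).preimage_of_isOpenMap
        g.continuous g.isOpenMap).mono hsub
    -- B contains a countable intersection of residual sets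
    set te : (Fin n → Bool) → (ℕ → Bool) := fun t m => if h : m < n then t ⟨m, h⟩ else false
    have hres : ∀ t : Fin n → Bool, (C (te t) \ B)ᶜ ∈ residual (ℕ → Bool) := fun t => key (te t)
    have : (⋂ t : Fin n → Bool, (C (te t) \ B)ᶜ) ∈ residual (ℕ → Bool) :=
      (countable_iInter_mem).mpr hres
    refine mem_of_superset this ?_
    intro x hx
    have hxmem : x ∈ C (te (fun i => x i)) := by
      intro m hm
      simp [te, dif_pos hm]
    have := mem_iInter.mp hx (fun i => x i)
    by_contra hxB
    exact this ⟨hxmem, hxB⟩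

/-- If `h : 2^ω → 2^ω` is Baire measurable and constant on `E₀`-classes, then `h` is
constant on a comeagre set. -/
theorem baire_measurable_E0_invariant_constant_on_comeagre
    (h : (ℕ → Bool) → (ℕ → Bool))
    (hBaire : ∀ U : Set (ℕ → Bool), IsOpen U → BaireMeasurableSet (h ⁻¹' U))
    (hInv : ∀ x y, E0 x y → h x = h y) :
    ∃ c : ℕ → Bool, {x | h x = c} ∈ residual (ℕ → Bool) := by
  classical
  set B : ℕ → Set (ℕ → Bool) := fun n => h ⁻¹' {y | y n = true} with hBdef
  have hBopen : ∀ n, IsOpen {y : ℕ → Bool | y n = true} := by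
    intro n
    have : {y : ℕ → Bool | y n = true} = (fun y : ℕ → Bool => y n) ⁻¹' {true} := by
      ext y; simp
    rw [this]
    exact (isOpen_discrete ({true} : Set Bool)).preimage (continuous_apply n)
  have hBmeas : ∀ n, BaireMeasurableSet (B n) := fun n => hBaire _ (hBopen n)
  have hBinv : ∀ n, ∀ x y, E0 x y → (x ∈ B n ↔ y ∈ B n) := by
    intro n x y hxy
    simp only [hBdef, Set.mem_preimage, Set.mem_setOf_eq, hInv x y hxy]
  have h01 : ∀ n, IsMeagre (B n) ∨ B n ∈ residual (ℕ → Bool) := fun n =>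
    zero_one (B n) (hBmeas n) (hBinv n)
  set c : ℕ → Bool := fun n => if B n ∈ residual (ℕ → Bool) then true else false with hc
  refine ⟨c, ?_⟩
  have hcn : ∀ n, {x | h x n = c n} ∈ residual (ℕ → Bool) := by
    intro n
    by_cases hr : B n ∈ residual (ℕ → Bool)
    · have hct : c n = true := if_pos hr
      have : {x | h x n = c n} = B n := by
        ext x; simp [hct, hBdef]
      rw [this]; exact hr
    · have hm : IsMeagre (B n) := (h01 n).resolve_right hr
      have hcf : c n = false := if_neg hr
      have : {x | h x n = c n} = (B n)ᶜ := by
        ext x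
        simp only [hcf, hBdef, Set.mem_compl_iff, Set.mem_preimage, Set.mem_setOf_eq]
        cases hx : h x n <;> simp
      rw [this]; exact hm
  have : (⋂ n, {x | h x n = c n}) ∈ residual (ℕ → Bool) := countable_iInter_mem.mpr hcn
  refine mem_of_superset this ?_
  intro x hx
  funext n
  exact mem_iInter.mp hx n
end

section
/- Let (X, σ) be a second countable topological space with countable basis 𝒰, and let f : 𝒰 → ω^{<ω} be 𝒰-monotone, i.e., U ⊆ V implies f(V) ⊑ f(U) (f(V) is an initial segment of f(U)). Define lim_𝒰 f (x) = y iff for every k there exists U ∈ 𝒰 with x ∈ U, |f(U)| ≥ k, and f(U) ⊑ y. Then the domain of lim_𝒰 f is a Gδ set in (X, σ), and lim_𝒰 f is continuous on its domain (with ω^ω given the usual product topology). -/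
/-- `s` is an initial segment of the infinite sequence `y`. -/
def PrefixOfSeq (s : List ℕ) (y : ℕ → ℕ) : Prop := ∀ i < s.length, s.getD i 0 = y i

/-- `f : 𝒰 → ω^{<ω}` is `𝒰`-monotone: `U ⊆ V` implies `f V ⊑ f U`. -/
def UMonotone {X : Type*} (B : Set (Set X)) (f : Set X → List ℕ) : Prop :=
  ∀ U ∈ B, ∀ V ∈ B, U ⊆ V → (f V) <+: (f U)

/-- `(lim_𝒰 f)(x) = y`. -/
def LimRel {X : Type*} (B : Set (Set X)) (f : Set X → List ℕ) (x : X) (y : ℕ → ℕ) : Prop :=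
  ∀ k : ℕ, ∃ U ∈ B, x ∈ U ∧ k ≤ (f U).length ∧ PrefixOfSeq (f U) y

lemma compat {X : Type*} [TopologicalSpace X] {B : Set (Set X)}
    (hB : TopologicalSpace.IsTopologicalBasis B)
    {f : Set X → List ℕ} (hf : UMonotone B f) {x : X} {U V : Set X}
    (hU : U ∈ B) (hV : V ∈ B) (hxU : x ∈ U) (hxV : x ∈ V)
    {i : ℕ} (hiU : i < (f U).length) (hiV : i < (f V).length) :
    (f U).getD i 0 = (f V).getD i 0 := by
  obtain ⟨W, hW, hxW, hWsub⟩ := hB.exists_subset_inter U hU V hV x ⟨hxU, hxV⟩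
  have h1 : f U <+: f W := hf W hW U hU (hWsub.trans Set.inter_subset_left)
  have h2 : f V <+: f W := hf W hW V hV (hWsub.trans Set.inter_subset_right)
  rw [List.getD_eq_getElem _ _ hiU, List.getD_eq_getElem _ _ hiV,
    h1.getElem hiU, h2.getElem hiV]

/-- For a `𝒰`-monotone `f`, the domain of `lim_𝒰 f` is `Gδ` and `lim_𝒰 f` is continuous
on its domain. -/
theorem limit_of_monotone_is_continuous_on_Gdelta_domain
    {X : Type*} [TopologicalSpace X] (B : Set (Set X))
    (hB : TopologicalSpace.IsTopologicalBasis B) (hBc : B.Countable)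
    (f : Set X → List ℕ) (hf : UMonotone B f) :
    IsGδ {x | ∃ y : ℕ → ℕ, LimRel B f x y} ∧
      ∀ g : X → ℕ → ℕ, (∀ x ∈ {x | ∃ y : ℕ → ℕ, LimRel B f x y}, LimRel B f x (g x)) →
        ContinuousOn g {x | ∃ y : ℕ → ℕ, LimRel B f x y} := by
  have hdom : {x : X | ∃ y : ℕ → ℕ, LimRel B f x y}
      = ⋂ k : ℕ, ⋃₀ {U | U ∈ B ∧ k ≤ (f U).length} := by
    ext x
    simp only [Set.mem_setOf_eq, Set.mem_iInter, Set.mem_sUnion]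
    constructor
    · rintro ⟨y, hy⟩ k
      obtain ⟨U, hU, hxU, hk, -⟩ := hy k
      exact ⟨U, ⟨hU, hk⟩, hxU⟩
    · intro h
      classical
      have h' : ∀ i : ℕ, ∃ U, U ∈ B ∧ x ∈ U ∧ i < (f U).length := by
        intro i
        obtain ⟨U, ⟨hU, hk⟩, hxU⟩ := h (i + 1)
        exact ⟨U, hU, hxU, hk⟩
      set y : ℕ → ℕ := fun i => (f (h' i).choose).getD i 0 with hy
      refine ⟨y, fun k => ?_⟩
      obtain ⟨U, ⟨hU, hk⟩, hxU⟩ := h k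
      refine ⟨U, hU, hxU, hk, fun i hi => ?_⟩
      obtain ⟨hV, hxV, hiV⟩ := (h' i).choose_spec
      exact compat hB hf hU hV hxU hxV hi hiV
  constructor
  · rw [hdom]
    refine .iInter fun k => IsOpen.isGδ (isOpen_sUnion fun U hU => hB.isOpen hU.1)
  · intro g hg x hx
    rw [ContinuousWithinAt, tendsto_pi_nhds]
    intro i
    obtain ⟨U, hU, hxU, hk, hpre⟩ := hg x hx (i + 1)
    have hev : ∀ᶠ x' in nhdsWithin x {x | ∃ y : ℕ → ℕ, LimRel B f x y},
        g x' i = g x i := by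
      filter_upwards [self_mem_nhdsWithin,
        nhdsWithin_le_nhds ((hB.isOpen hU).mem_nhds hxU)] with x' hx' hx'U
      obtain ⟨V, hV, hx'V, hk', hpre'⟩ := hg x' hx' (i + 1)
      have e1 : (f V).getD i 0 = g x' i := hpre' i hk'
      have e2 : (f U).getD i 0 = g x i := hpre i hk
      rw [← e1, ← e2]
      exact (compat hB hf hV hU hx'V hx'U hk' hk)
    exact tendsto_const_nhds.congr' (hev.mono fun a h => h.symm)
end

section
/- Let X ⊆ ω^ω be a nonempty Δ¹₁ set containing no hyperarithmetic real, and let E_X be the equivalence relation on ω^ω with exactly two classes X and its complement. Then E_X is Δ¹₁ reducible to =₂ (the relation x ≡ y iff x(0) = y(0) = 0 or x(0), y(0) ≥ 1), but =₂ is not Δ¹₁ reducible to E_X. -/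
/-- Codes for functions partial recursive in an oracle. -/
inductive OCode : Type
  | zero | succ | left | right | oracle
  | pair (cf cg : OCode)
  | comp (cf cg : OCode)
  | prec (cf cg : OCode)
  | rfind (cf : OCode)

/-- Evaluation of an oracle code relative to the oracle `g`. -/
def OCode.eval (g : ℕ → ℕ) : OCode → ℕ →. ℕ
  | OCode.zero => fun _ => Part.some 0
  | OCode.succ => fun n => Part.some (n + 1)
  | OCode.left => fun n => Part.some (Nat.unpair n).1
  | OCode.right => fun n => Part.some (Nat.unpair n).2
  | OCode.oracle => fun n => Part.some (g n)
  | OCode.pair cf cg => fun n => Nat.pair <$> cf.eval g n <*> cg.eval g n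
  | OCode.comp cf cg => fun n => cg.eval g n >>= cf.eval g
  | OCode.prec cf cg => fun n =>
      (Nat.unpair n).2.rec (cf.eval g (Nat.unpair n).1)
        (fun y ih => ih >>= fun i => cg.eval g (Nat.pair (Nat.unpair n).1 (Nat.pair y i)))
  | OCode.rfind cf => fun n =>
      Nat.rfind fun m => (fun k => k = 0) <$> cf.eval g (Nat.pair m n)

/-- The code of the initial segment `x ↾ k` of a real. -/
def seqCode (x : ℕ → ℕ) (k : ℕ) : ℕ := Encodable.encode ((List.range k).map x)

/-- `S ⊆ ω` is `Σ¹₁` in the real `z` (by the Kleene normal form for `Σ¹₁`). -/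
def Sigma11In (z : ℕ → ℕ) (S : Set ℕ) : Prop :=
  ∃ c : OCode, ∀ n, n ∈ S ↔ ∃ y : ℕ → ℕ, ∀ k,
    c.eval z (Nat.pair n (seqCode y k)) = Part.some 1

/-- `S ⊆ ω` is `Δ¹₁` (hyperarithmetic) in the real `z`. -/
def Delta11In (z : ℕ → ℕ) (S : Set ℕ) : Prop := Sigma11In z S ∧ Sigma11In z Sᶜ

/-- The graph of a real, coded as a set of naturals. -/
def realGraph (x : ℕ → ℕ) : Set ℕ := {p | x (Nat.unpair p).1 = (Nat.unpair p).2}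

/-- The real `x` is hyperarithmetic (`Δ¹₁`) in the real `z`. -/
def HypIn (z x : ℕ → ℕ) : Prop := Delta11In z (realGraph x)

/-- The real `x` is hyperarithmetic (`Δ¹₁`). -/
def HypReal (x : ℕ → ℕ) : Prop := HypIn (fun _ => 0) x

/-- `S ⊆ ω^ω` is `Σ¹₁` in the real `z`. -/
def Sigma11SetIn (z : ℕ → ℕ) (S : Set (ℕ → ℕ)) : Prop :=
  ∃ c : OCode, ∀ x, x ∈ S ↔ ∃ y : ℕ → ℕ, ∀ k,
    c.eval z (Nat.pair (seqCode x k) (seqCode y k)) = Part.some 1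

/-- `S ⊆ ω^ω` is `Δ¹₁` (effectively Borel) in the real `z`. -/
def Delta11SetIn (z : ℕ → ℕ) (S : Set (ℕ → ℕ)) : Prop :=
  Sigma11SetIn z S ∧ Sigma11SetIn z Sᶜ

/-- `S ⊆ ω^ω` is (lightface) `Δ¹₁`. -/
def Delta11Set (S : Set (ℕ → ℕ)) : Prop := Delta11SetIn (fun _ => 0) S

/-- The join of two reals. -/
def join2 (x y : ℕ → ℕ) : ℕ → ℕ := fun n => if n % 2 = 0 then x (n / 2) else y (n / 2)

/-- A function `ω^ω → ω^ω` is `Δ¹₁` in `z` if its graph is. -/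
def HypFunIn (z : ℕ → ℕ) (f : (ℕ → ℕ) → ℕ → ℕ) : Prop :=
  Delta11SetIn z {w | ∃ x : ℕ → ℕ, w = join2 x (f x)}

/-- A function `ω^ω → ω^ω` is `Δ¹₁` (hyperarithmetic). -/
def HypFun (f : (ℕ → ℕ) → ℕ → ℕ) : Prop := HypFunIn (fun _ => 0) f

/-- The equivalence relation `=₂` on `ω^ω`: `x ≡ y` iff `x 0 = y 0 = 0` or `x 0, y 0 ≥ 1`. -/
def Eq2 (x y : ℕ → ℕ) : Prop := (x 0 = 0 ∧ y 0 = 0) ∨ (1 ≤ x 0 ∧ 1 ≤ y 0)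


----------------------------------------------------------------
-- Auxiliary machinery
----------------------------------------------------------------

theorem ocode_of_natPartrec (z : ℕ → ℕ) {f : ℕ →. ℕ} (hf : Nat.Partrec f) :
    ∃ c : OCode, ∀ n, c.eval z n = f n := by
  induction hf with
  | zero => exact ⟨OCode.zero, fun n => rfl⟩
  | succ => exact ⟨OCode.succ, fun n => rfl⟩
  | left => exact ⟨OCode.left, fun n => rfl⟩
  | right => exact ⟨OCode.right, fun n => rfl⟩
  | @pair f g _ _ ihf ihg =>
    obtain ⟨cf, hcf⟩ := ihf; obtain ⟨cg, hcg⟩ := ihg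
    exact ⟨cf.pair cg, fun n => by simp [OCode.eval, hcf, hcg]⟩
  | @comp f g _ _ ihf ihg =>
    obtain ⟨cf, hcf⟩ := ihf; obtain ⟨cg, hcg⟩ := ihg
    refine ⟨cf.comp cg, fun n => ?_⟩
    have : cf.eval z = f := funext hcf
    simp [OCode.eval, hcg, this]
  | @prec f g _ _ ihf ihg =>
    obtain ⟨cf, hcf⟩ := ihf; obtain ⟨cg, hcg⟩ := ihg
    refine ⟨cf.prec cg, fun n => ?_⟩
    simp only [OCode.eval, hcf, hcg, Nat.unpaired]
  | @rfind f _ ih =>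
    obtain ⟨cf, hcf⟩ := ih
    refine ⟨OCode.rfind (cf.comp (OCode.pair OCode.right OCode.left)), fun n => ?_⟩
    simp only [OCode.eval, hcf]
    congr 1; funext m
    simp [OCode.eval, hcf, Seq.seq, Part.bind_eq_bind]
    erw [Part.bind_eq_bind, Part.bind_some, hcf]

theorem ocode_of_primrec (z : ℕ → ℕ) {F : ℕ → ℕ} (hF : Primrec F) :
    ∃ c : OCode, ∀ n, c.eval z n = Part.some (F n) := by
  have h1 : Nat.Partrec (fun n => Part.some (F n)) := by
    have := Partrec.nat_iff.1 hF.to_comp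
    exact this.of_eq (fun n => rfl)
  exact ocode_of_natPartrec z h1

/-- extract the `i`-th entry of a coded list (default 0) -/
def pget (b i : ℕ) : ℕ := (Denumerable.ofNat (List ℕ) b).getD i 0

/-- length of a coded list -/
def plen (b : ℕ) : ℕ := (Denumerable.ofNat (List ℕ) b).length

theorem primrec_pget : Primrec₂ pget :=
  (Primrec.list_getD 0).comp ((Primrec.ofNat (List ℕ)).comp Primrec.fst) Primrec.snd

theorem primrec_plen : Primrec plen :=
  Primrec.list_length.comp (Primrec.ofNat (List ℕ))

theorem plen_seqCode (x : ℕ → ℕ) (k : ℕ) : plen (seqCode x k) = k := by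
  simp [plen, seqCode, Denumerable.ofNat_encode]

theorem pget_seqCode (x : ℕ → ℕ) {i k : ℕ} (h : i < k) : pget (seqCode x k) i = x i := by
  simp only [pget, seqCode, Denumerable.ofNat_encode]
  rw [List.getD_eq_getElem?_getD, List.getElem?_eq_getElem (by simpa using h)]
  simp

def e0 : ℕ := Encodable.encode ([] : List ℕ)

theorem seqCode_zero' (x : ℕ → ℕ) : seqCode x 0 = e0 := by simp [seqCode, e0]

theorem seqCode_congr {x y : ℕ → ℕ} {k : ℕ} (h : ∀ i < k, x i = y i) :
    seqCode x k = seqCode y k := by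
  unfold seqCode
  congr 1
  apply List.map_congr_left
  intro i hi
  exact h i (List.mem_range.1 hi)

theorem primrec_seqCode {E : ℕ → ℕ → ℕ} {J : ℕ → ℕ} (hE : Primrec₂ E) (hJ : Primrec J) :
    Primrec fun n => seqCode (E n) (J n) :=
  Primrec.encode.comp (Primrec.list_map (Primrec.list_range.comp hJ) hE)

/-- products along initial segments -/
def prodUpto (g : ℕ → ℕ) (k : ℕ) : ℕ := ((List.range k).map g).prod

theorem prodUpto_eq_one {g : ℕ → ℕ} {k : ℕ} : prodUpto g k = 1 ↔ ∀ i < k, g i = 1 := by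
  induction k with
  | zero => simp [prodUpto]
  | succ k ih =>
    rw [prodUpto, List.range_succ, List.map_append, List.prod_append]
    simp only [List.map_cons, List.map_nil, List.prod_cons, List.prod_nil, mul_one]
    constructor
    · intro h1 i hi
      rcases Nat.lt_succ_iff_lt_or_eq.1 hi with h | rfl
      · exact ih.1 (Nat.eq_one_of_mul_eq_one_right h1) i h
      · exact Nat.eq_one_of_mul_eq_one_left h1
    · intro h
      have h1 : prodUpto g k = 1 := ih.2 fun i hi => h i (hi.trans (Nat.lt_succ_self k))
      rw [prodUpto] at h1
      rw [h1, h k (Nat.lt_succ_self k)]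

theorem primrec_prodUpto {g : ℕ → ℕ → ℕ} {J : ℕ → ℕ} (hg : Primrec₂ g) (hJ : Primrec J) :
    Primrec fun n => prodUpto (g n) (J n) := by
  have h := Primrec.list_foldl (Primrec.list_range.comp hJ) (Primrec.const 1)
    ((Primrec.nat_mul.comp (Primrec.fst.comp Primrec.snd)
      (hg.comp Primrec.fst (Primrec.snd.comp Primrec.snd))).to₂)
  refine h.of_eq fun n => ?_
  show (List.range (J n)).foldl (fun s i => s * g n i) 1 = prodUpto (g n) (J n)
  rw [prodUpto, ← List.foldl_map, List.prod_eq_foldl]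

theorem ocode_combine (z : ℕ → ℕ) (c₁ c₂ : OCode) {A₁ A₂ F : ℕ → ℕ}
    (h₁ : Primrec A₁) (h₂ : Primrec A₂) (hF : Primrec F) :
    ∃ d : OCode, ∀ n, (d.eval z n = Part.some 1 ↔
      (c₁.eval z (A₁ n) = Part.some 1 ∧ c₂.eval z (A₂ n) = Part.some 1 ∧ F n = 1)) := by
  obtain ⟨cA₁, hcA₁⟩ := ocode_of_primrec z h₁
  obtain ⟨cA₂, hcA₂⟩ := ocode_of_primrec z h₂
  obtain ⟨cF, hcF⟩ := ocode_of_primrec z hF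
  obtain ⟨cM, hcM⟩ := ocode_of_primrec z
    (F := fun p => (Nat.unpair p).1 * ((Nat.unpair (Nat.unpair p).2).1 * (Nat.unpair (Nat.unpair p).2).2))
    (Primrec.nat_mul.comp (Primrec.fst.comp Primrec.unpair)
      (Primrec.nat_mul.comp
        (Primrec.fst.comp (Primrec.unpair.comp (Primrec.snd.comp Primrec.unpair)))
        (Primrec.snd.comp (Primrec.unpair.comp (Primrec.snd.comp Primrec.unpair)))))
  refine ⟨OCode.comp cM (OCode.pair (OCode.comp c₁ cA₁) (OCode.pair (OCode.comp c₂ cA₂) cF)), fun n => ?_⟩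
  have heval : (OCode.comp cM (OCode.pair (OCode.comp c₁ cA₁) (OCode.pair (OCode.comp c₂ cA₂) cF))).eval z n =
      (c₁.eval z (A₁ n)).bind fun u => (c₂.eval z (A₂ n)).bind fun v =>
        Part.some (u * (v * F n)) := by
    show ((Nat.pair <$> (cA₁.eval z n >>= c₁.eval z) <*>
        (Nat.pair <$> (cA₂.eval z n >>= c₂.eval z) <*> cF.eval z n)) >>= cM.eval z) = _
    rw [hcA₁, hcA₂, hcF]
    have hM : cM.eval z = fun p => Part.some ((Nat.unpair p).1 *
        ((Nat.unpair (Nat.unpair p).2).1 * (Nat.unpair (Nat.unpair p).2).2)) := funext hcM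
    rw [hM]
    simp only [Part.bind_eq_bind, Part.bind_some, Seq.seq, Part.map_eq_map, Part.bind_map,
      Part.map_bind, Part.bind_assoc, Part.bind_some_eq_map, Part.map_map]
    simp [Function.comp, Nat.unpair_pair, Part.bind_eq_bind]
    erw [Part.bind_eq_bind, Part.bind_some, Part.bind_eq_bind, Part.bind_some]
    simp [Part.bind_some_eq_map]
  rw [heval]
  constructor
  · intro h
    rw [Part.eq_some_iff] at h
    simp only [Part.mem_bind_iff, Part.mem_some_iff] at h
    obtain ⟨u, hu, v, hv, h1⟩ := h
    have h1 : u * (v * F n) = 1 := h1.symm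
    have hu1 : u = 1 := Nat.eq_one_of_mul_eq_one_right h1
    have h2 : v * F n = 1 := Nat.eq_one_of_mul_eq_one_left h1
    have hv1 : v = 1 := Nat.eq_one_of_mul_eq_one_right h2
    have hF1 : F n = 1 := Nat.eq_one_of_mul_eq_one_left h2
    subst hu1; subst hv1
    exact ⟨Part.eq_some_iff.2 hu, Part.eq_some_iff.2 hv, hF1⟩
  · rintro ⟨hu, hv, hF1⟩
    rw [hu, hv]
    simp [hF1]

theorem sigma11In_of_primrec (z : ℕ → ℕ) {S : Set ℕ} {F : ℕ → ℕ}
    (hF : Primrec F) (hS : ∀ n, n ∈ S ↔ F n = 1) : Sigma11In z S := by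
  obtain ⟨c, hc⟩ := ocode_of_primrec z (hF.comp (Primrec.fst.comp Primrec.unpair))
  refine ⟨c, fun n => ?_⟩
  rw [hS]
  constructor
  · intro h
    refine ⟨fun _ => 0, fun k => ?_⟩
    rw [hc, Nat.unpair_pair]
    simp [h]
  · rintro ⟨y, hy⟩
    have h := hy 0
    rw [hc, Nat.unpair_pair] at h
    exact Part.some_inj.1 h

theorem hypIn_const (z : ℕ → ℕ) (d : ℕ) : HypIn z (fun _ => d) := by
  constructor
  · refine sigma11In_of_primrec z (F := fun n => if (Nat.unpair n).2 = d then 1 else 0)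
      (Primrec.ite (Primrec.eq.comp (Primrec.snd.comp Primrec.unpair) (Primrec.const d))
        (Primrec.const 1) (Primrec.const 0)) fun n => ?_
    show d = (Nat.unpair n).2 ↔ (if (Nat.unpair n).2 = d then 1 else 0) = 1
    by_cases h : (Nat.unpair n).2 = d
    · simp [h]
    · simp only [if_neg h]
      simp [Ne.symm h]
  · refine sigma11In_of_primrec z (F := fun n => if (Nat.unpair n).2 = d then 0 else 1)
      (Primrec.ite (Primrec.eq.comp (Primrec.snd.comp Primrec.unpair) (Primrec.const d))
        (Primrec.const 0) (Primrec.const 1)) fun n => ?_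
    show ¬(d = (Nat.unpair n).2) ↔ (if (Nat.unpair n).2 = d then 0 else 1) = 1
    by_cases h : (Nat.unpair n).2 = d
    · simp [h]
    · simp only [if_neg h]
      simp [Ne.symm h]

theorem base_eval {z : ℕ → ℕ} {S : Set (ℕ → ℕ)} {c : OCode}
    (hc : ∀ x, x ∈ S ↔ ∃ y : ℕ → ℕ, ∀ k,
      c.eval z (Nat.pair (seqCode x k) (seqCode y k)) = Part.some 1)
    (hne : S.Nonempty) : c.eval z (Nat.pair e0 e0) = Part.some 1 := by
  obtain ⟨x, hx⟩ := hne
  obtain ⟨y, hy⟩ := (hc x).1 hx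
  have h := hy 0
  rwa [seqCode_zero', seqCode_zero' y] at h

theorem join2_even (x v : ℕ → ℕ) (n : ℕ) : join2 x v (2*n) = x n := by
  have h1 : (2*n) % 2 = 0 := by omega
  have h2 : (2*n) / 2 = n := by omega
  simp [join2, h1, h2]

theorem join2_odd (x v : ℕ → ℕ) (n : ℕ) : join2 x v (2*n+1) = v n := by
  have h1 : (2*n+1) % 2 = 1 := by omega
  have h2 : (2*n+1) / 2 = n := by omega
  simp [join2, h1, h2]

theorem mem_graphSet_iff {X : Set (ℕ → ℕ)} {F : (ℕ → ℕ) → ℕ → ℕ}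
    (h1 : ∀ x ∈ X, F x = fun _ => 1) (h0 : ∀ x ∉ X, F x = fun _ => 0) (w : ℕ → ℕ) :
    (∃ x, w = join2 x (F x)) ↔
      (((∀ n, w (2*n+1) = 1) ∧ (fun n => w (2*n)) ∈ X) ∨
       ((∀ n, w (2*n+1) = 0) ∧ (fun n => w (2*n)) ∉ X)) := by
  constructor
  · rintro ⟨x, rfl⟩
    have he : (fun n => join2 x (F x) (2*n)) = x := funext fun n => join2_even x (F x) n
    by_cases hx : x ∈ X
    · left
      refine ⟨fun n => ?_, ?_⟩
      · rw [join2_odd, h1 x hx]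
      · rw [he]; exact hx
    · right
      refine ⟨fun n => ?_, ?_⟩
      · rw [join2_odd, h0 x hx]
      · rw [he]; exact hx
  · intro h
    classical
    refine ⟨fun n => w (2*n), funext fun n => ?_⟩
    rcases Nat.mod_two_eq_zero_or_one n with hn | hn
    · have h2 : 2 * (n / 2) = n := by omega
      have hj := join2_even (fun n => w (2*n)) (F fun n => w (2*n)) (n/2)
      rw [h2] at hj
      exact hj.symm
    · have h2 : 2 * (n / 2) + 1 = n := by omega
      have hj := join2_odd (fun n => w (2*n)) (F fun n => w (2*n)) (n/2)
      rw [h2] at hj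
      rcases h with ⟨hodd, hX⟩ | ⟨hodd, hX⟩
      · have hv : F (fun n => w (2*n)) (n/2) = 1 := by rw [h1 _ hX]
        rw [hj, hv]
        have := hodd (n/2); rw [h2] at this; exact this
      · have hv : F (fun n => w (2*n)) (n/2) = 0 := by rw [h0 _ hX]
        rw [hj, hv]
        have := hodd (n/2); rw [h2] at this; exact this


----------------------------------------------------------------
-- The concrete primitive recursive data manipulations
----------------------------------------------------------------

/-- `if cond then 0 else 1 = 1` iff `¬ cond` -/
theorem ite01_eq_one {c : Prop} [Decidable c] : (if c then 0 else 1) = 1 ↔ ¬ c := by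
  split_ifs with h <;> simp [h]

section GraphCodes

-- positive code data for the indicator graph
def gJ (m : ℕ) : ℕ := (plen (Nat.unpair m).1 + 1) / 2

def gEA (m : ℕ) : ℕ :=
  Nat.pair (seqCode (fun i => pget (Nat.unpair m).1 (2*i)) (gJ m))
    (seqCode (fun i => pget (Nat.unpair m).2 i) (gJ m))

def gA1 (m : ℕ) : ℕ :=
  if 2 ≤ plen (Nat.unpair m).1 ∧ pget (Nat.unpair m).1 1 = 1 then gEA m else Nat.pair e0 e0

def gA0 (m : ℕ) : ℕ :=
  if 2 ≤ plen (Nat.unpair m).1 ∧ pget (Nat.unpair m).1 1 = 0 then gEA m else Nat.pair e0 e0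

def gF (m : ℕ) : ℕ :=
  if plen (Nat.unpair m).1 ≤ 1 then 1
  else if 2 ≤ pget (Nat.unpair m).1 1 then 0
  else prodUpto (fun i => if i % 2 = 1 ∧ pget (Nat.unpair m).1 i ≠ pget (Nat.unpair m).1 1
    then 0 else 1) (plen (Nat.unpair m).1)

-- basic primrec subterms
private theorem pr_a : Primrec fun m => (Nat.unpair m).1 := Primrec.fst.comp Primrec.unpair
private theorem pr_b : Primrec fun m => (Nat.unpair m).2 := Primrec.snd.comp Primrec.unpair
private theorem pr_plen_a : Primrec fun m => plen (Nat.unpair m).1 := primrec_plen.comp pr_a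

theorem primrec_gJ : Primrec gJ :=
  Primrec.nat_div.comp (Primrec.succ.comp pr_plen_a) (Primrec.const 2)

theorem primrec_gEA : Primrec gEA :=
  Primrec₂.natPair.comp
    (primrec_seqCode
      ((primrec_pget.comp (pr_a.comp Primrec.fst)
        (Primrec.nat_mul.comp (Primrec.const 2) Primrec.snd)).to₂) primrec_gJ)
    (primrec_seqCode
      ((primrec_pget.comp (pr_b.comp Primrec.fst) Primrec.snd).to₂) primrec_gJ)

private theorem pr_pget_a1 : Primrec fun m => pget (Nat.unpair m).1 1 :=
  primrec_pget.comp pr_a (Primrec.const 1)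

theorem primrec_gA1 : Primrec gA1 :=
  Primrec.ite
    ((Primrec.nat_le.comp (Primrec.const 2) pr_plen_a).and
      (Primrec.eq.comp pr_pget_a1 (Primrec.const 1)))
    primrec_gEA (Primrec.const (Nat.pair e0 e0))

theorem primrec_gA0 : Primrec gA0 :=
  Primrec.ite
    ((Primrec.nat_le.comp (Primrec.const 2) pr_plen_a).and
      (Primrec.eq.comp pr_pget_a1 (Primrec.const 0)))
    primrec_gEA (Primrec.const (Nat.pair e0 e0))

theorem primrec_gF : Primrec gF := by
  refine Primrec.ite (Primrec.nat_le.comp pr_plen_a (Primrec.const 1)) (Primrec.const 1) ?_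
  refine Primrec.ite (Primrec.nat_le.comp (Primrec.const 2) pr_pget_a1) (Primrec.const 0) ?_
  refine primrec_prodUpto ?_ pr_plen_a
  refine Primrec.ite ?_ (Primrec.const 0) (Primrec.const 1)
  exact (Primrec.eq.comp (Primrec.nat_mod.comp Primrec.snd (Primrec.const 2))
      (Primrec.const 1)).and
    ((Primrec.eq.comp
      (primrec_pget.comp (pr_a.comp Primrec.fst) Primrec.snd)
      (pr_pget_a1.comp Primrec.fst)).not)

-- evaluation lemmas
variable {w y : ℕ → ℕ} {k : ℕ}

theorem gA1_small (hk : k ≤ 1) :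
    gA1 (Nat.pair (seqCode w k) (seqCode y k)) = Nat.pair e0 e0 := by
  rw [gA1, if_neg]
  rw [Nat.unpair_pair]
  simp only [plen_seqCode]
  omega

theorem gA0_small (hk : k ≤ 1) :
    gA0 (Nat.pair (seqCode w k) (seqCode y k)) = Nat.pair e0 e0 := by
  rw [gA0, if_neg]
  rw [Nat.unpair_pair]
  simp only [plen_seqCode]
  omega

theorem gEA_eval (hk : 2 ≤ k) :
    gEA (Nat.pair (seqCode w k) (seqCode y k)) =
      Nat.pair (seqCode (fun n => w (2*n)) ((k+1)/2)) (seqCode y ((k+1)/2)) := by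
  rw [gEA, Nat.unpair_pair]
  simp only [plen_seqCode, gJ, Nat.unpair_pair]
  congr 1
  · exact seqCode_congr fun i hi => pget_seqCode w (by omega)
  · exact seqCode_congr fun i hi => pget_seqCode y (by omega)

theorem gA1_sel (hk : 2 ≤ k) (hs : w 1 = 1) :
    gA1 (Nat.pair (seqCode w k) (seqCode y k)) =
      Nat.pair (seqCode (fun n => w (2*n)) ((k+1)/2)) (seqCode y ((k+1)/2)) := by
  rw [gA1, if_pos, gEA_eval hk]
  rw [Nat.unpair_pair]
  simp only [plen_seqCode]
  exact ⟨hk, by rw [pget_seqCode w (by omega)]; exact hs⟩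

theorem gA1_nosel (hk : 2 ≤ k) (hs : w 1 ≠ 1) :
    gA1 (Nat.pair (seqCode w k) (seqCode y k)) = Nat.pair e0 e0 := by
  rw [gA1, if_neg]
  rw [Nat.unpair_pair]
  simp only [plen_seqCode]
  rw [pget_seqCode w (by omega)]
  exact fun h => hs h.2

theorem gA0_sel (hk : 2 ≤ k) (hs : w 1 = 0) :
    gA0 (Nat.pair (seqCode w k) (seqCode y k)) =
      Nat.pair (seqCode (fun n => w (2*n)) ((k+1)/2)) (seqCode y ((k+1)/2)) := by
  rw [gA0, if_pos, gEA_eval hk]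
  rw [Nat.unpair_pair]
  simp only [plen_seqCode]
  exact ⟨hk, by rw [pget_seqCode w (by omega)]; exact hs⟩

theorem gA0_nosel (hk : 2 ≤ k) (hs : w 1 ≠ 0) :
    gA0 (Nat.pair (seqCode w k) (seqCode y k)) = Nat.pair e0 e0 := by
  rw [gA0, if_neg]
  rw [Nat.unpair_pair]
  simp only [plen_seqCode]
  rw [pget_seqCode w (by omega)]
  exact fun h => hs h.2

theorem gF_small (hk : k ≤ 1) :
    gF (Nat.pair (seqCode w k) (seqCode y k)) = 1 := by
  rw [gF, if_pos]
  rw [Nat.unpair_pair]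
  simp only [plen_seqCode]
  exact hk

theorem gF_eval (hk : 2 ≤ k) :
    gF (Nat.pair (seqCode w k) (seqCode y k)) = 1 ↔
      (w 1 ≤ 1 ∧ ∀ i < k, i % 2 = 1 → w i = w 1) := by
  rw [gF, Nat.unpair_pair]
  simp only [plen_seqCode]
  rw [if_neg (by omega), pget_seqCode w (show 1 < k by omega)]
  by_cases hs : 2 ≤ w 1
  · rw [if_pos hs]
    constructor
    · intro h; exact absurd h (by omega)
    · rintro ⟨h, -⟩; omega
  · rw [if_neg hs, prodUpto_eq_one]
    constructor
    · intro h
      refine ⟨by omega, fun i hi hodd => ?_⟩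
      have := h i hi
      rw [pget_seqCode w hi] at this
      by_contra hne
      rw [if_pos ⟨hodd, hne⟩] at this
      exact absurd this (by omega)
    · rintro ⟨-, h⟩ i hi
      rw [pget_seqCode w hi, if_neg]
      rintro ⟨hodd, hne⟩
      exact hne (h i hi hodd)

end GraphCodes


section CographCodes

-- data for the complement of the indicator graph
def hJ (m : ℕ) : ℕ := (plen (Nat.unpair m).1 - 2) / 2

def hEA (m : ℕ) : ℕ :=
  Nat.pair (seqCode (fun i => pget (Nat.unpair m).1 (2*i)) (hJ m))
    (seqCode (fun i => pget (Nat.unpair m).2 (i+3)) (hJ m))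

def hA1 (m : ℕ) : ℕ :=
  if 3 ≤ plen (Nat.unpair m).1 ∧ pget (Nat.unpair m).2 0 = 1 then hEA m else Nat.pair e0 e0

def hA0 (m : ℕ) : ℕ :=
  if 3 ≤ plen (Nat.unpair m).1 ∧ pget (Nat.unpair m).2 0 = 0 then hEA m else Nat.pair e0 e0

def hF (m : ℕ) : ℕ :=
  if plen (Nat.unpair m).1 ≤ 2 then 1
  else if pget (Nat.unpair m).2 0 = 0 then
    prodUpto (fun i => if i % 2 = 1 ∧ pget (Nat.unpair m).1 i ≠ 1 then 0 else 1)
      (plen (Nat.unpair m).1)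
  else if pget (Nat.unpair m).2 0 = 1 then
    prodUpto (fun i => if i % 2 = 1 ∧ pget (Nat.unpair m).1 i ≠ 0 then 0 else 1)
      (plen (Nat.unpair m).1)
  else
    (if 2 * pget (Nat.unpair m).2 1 + 1 < plen (Nat.unpair m).1 ∧
        pget (Nat.unpair m).1 (2 * pget (Nat.unpair m).2 1 + 1) = 1 then 0 else 1) *
    (if 2 * pget (Nat.unpair m).2 2 + 1 < plen (Nat.unpair m).1 ∧
        pget (Nat.unpair m).1 (2 * pget (Nat.unpair m).2 2 + 1) = 0 then 0 else 1)

private theorem pr_a' : Primrec fun m => (Nat.unpair m).1 := Primrec.fst.comp Primrec.unpair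
private theorem pr_b' : Primrec fun m => (Nat.unpair m).2 := Primrec.snd.comp Primrec.unpair
private theorem pr_plen_a' : Primrec fun m => plen (Nat.unpair m).1 := primrec_plen.comp pr_a'
private theorem pr_pget_b (j : ℕ) : Primrec fun m => pget (Nat.unpair m).2 j :=
  primrec_pget.comp pr_b' (Primrec.const j)

theorem primrec_hJ : Primrec hJ :=
  Primrec.nat_div.comp (Primrec.nat_sub.comp pr_plen_a' (Primrec.const 2)) (Primrec.const 2)

theorem primrec_hEA : Primrec hEA :=
  Primrec₂.natPair.comp
    (primrec_seqCode
      ((primrec_pget.comp (pr_a'.comp Primrec.fst)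
        (Primrec.nat_mul.comp (Primrec.const 2) Primrec.snd)).to₂) primrec_hJ)
    (primrec_seqCode
      ((primrec_pget.comp (pr_b'.comp Primrec.fst)
        (Primrec.nat_add.comp Primrec.snd (Primrec.const 3))).to₂) primrec_hJ)

theorem primrec_hA1 : Primrec hA1 :=
  Primrec.ite
    ((Primrec.nat_le.comp (Primrec.const 3) pr_plen_a').and
      (Primrec.eq.comp (pr_pget_b 0) (Primrec.const 1)))
    primrec_hEA (Primrec.const (Nat.pair e0 e0))

theorem primrec_hA0 : Primrec hA0 :=
  Primrec.ite
    ((Primrec.nat_le.comp (Primrec.const 3) pr_plen_a').and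
      (Primrec.eq.comp (pr_pget_b 0) (Primrec.const 0)))
    primrec_hEA (Primrec.const (Nat.pair e0 e0))

theorem primrec_hF : Primrec hF := by
  refine Primrec.ite (Primrec.nat_le.comp pr_plen_a' (Primrec.const 2)) (Primrec.const 1) ?_
  refine Primrec.ite (Primrec.eq.comp (pr_pget_b 0) (Primrec.const 0)) ?_ ?_
  · refine primrec_prodUpto ?_ pr_plen_a'
    refine Primrec.ite ?_ (Primrec.const 0) (Primrec.const 1)
    exact (Primrec.eq.comp (Primrec.nat_mod.comp Primrec.snd (Primrec.const 2))
        (Primrec.const 1)).and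
      ((Primrec.eq.comp (primrec_pget.comp (pr_a'.comp Primrec.fst) Primrec.snd)
        (Primrec.const 1)).not)
  refine Primrec.ite (Primrec.eq.comp (pr_pget_b 0) (Primrec.const 1)) ?_ ?_
  · refine primrec_prodUpto ?_ pr_plen_a'
    refine Primrec.ite ?_ (Primrec.const 0) (Primrec.const 1)
    exact (Primrec.eq.comp (Primrec.nat_mod.comp Primrec.snd (Primrec.const 2))
        (Primrec.const 1)).and
      ((Primrec.eq.comp (primrec_pget.comp (pr_a'.comp Primrec.fst) Primrec.snd)
        (Primrec.const 0)).not)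
  refine Primrec.nat_mul.comp ?_ ?_
  · refine Primrec.ite ?_ (Primrec.const 0) (Primrec.const 1)
    have hpos : Primrec fun m => 2 * pget (Nat.unpair m).2 1 + 1 :=
      Primrec.succ.comp (Primrec.nat_mul.comp (Primrec.const 2) (pr_pget_b 1))
    exact (Primrec.nat_lt.comp hpos pr_plen_a').and
      (Primrec.eq.comp (primrec_pget.comp pr_a' hpos) (Primrec.const 1))
  · refine Primrec.ite ?_ (Primrec.const 0) (Primrec.const 1)
    have hpos : Primrec fun m => 2 * pget (Nat.unpair m).2 2 + 1 :=
      Primrec.succ.comp (Primrec.nat_mul.comp (Primrec.const 2) (pr_pget_b 2))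
    exact (Primrec.nat_lt.comp hpos pr_plen_a').and
      (Primrec.eq.comp (primrec_pget.comp pr_a' hpos) (Primrec.const 0))

variable {w y : ℕ → ℕ} {k : ℕ}

theorem hA1_small (hk : k ≤ 2) :
    hA1 (Nat.pair (seqCode w k) (seqCode y k)) = Nat.pair e0 e0 := by
  rw [hA1, if_neg]
  rw [Nat.unpair_pair]
  simp only [plen_seqCode]
  omega

theorem hA0_small (hk : k ≤ 2) :
    hA0 (Nat.pair (seqCode w k) (seqCode y k)) = Nat.pair e0 e0 := by
  rw [hA0, if_neg]
  rw [Nat.unpair_pair]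
  simp only [plen_seqCode]
  omega

theorem hEA_eval (hk : 3 ≤ k) :
    hEA (Nat.pair (seqCode w k) (seqCode y k)) =
      Nat.pair (seqCode (fun n => w (2*n)) ((k-2)/2)) (seqCode (fun n => y (n+3)) ((k-2)/2)) := by
  rw [hEA, Nat.unpair_pair]
  simp only [plen_seqCode, hJ, Nat.unpair_pair]
  congr 1
  · exact seqCode_congr fun i hi => pget_seqCode w (by omega)
  · exact seqCode_congr fun i hi => pget_seqCode y (by omega)

theorem hA1_sel (hk : 3 ≤ k) (hs : y 0 = 1) :
    hA1 (Nat.pair (seqCode w k) (seqCode y k)) =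
      Nat.pair (seqCode (fun n => w (2*n)) ((k-2)/2)) (seqCode (fun n => y (n+3)) ((k-2)/2)) := by
  rw [hA1, if_pos, hEA_eval hk]
  rw [Nat.unpair_pair]
  simp only [plen_seqCode]
  exact ⟨hk, by rw [pget_seqCode y (by omega)]; exact hs⟩

theorem hA1_nosel (hk : 3 ≤ k) (hs : y 0 ≠ 1) :
    hA1 (Nat.pair (seqCode w k) (seqCode y k)) = Nat.pair e0 e0 := by
  rw [hA1, if_neg]
  rw [Nat.unpair_pair]
  simp only [plen_seqCode]
  rw [pget_seqCode y (by omega : (0:ℕ) < k)]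
  exact fun h => hs h.2

theorem hA0_sel (hk : 3 ≤ k) (hs : y 0 = 0) :
    hA0 (Nat.pair (seqCode w k) (seqCode y k)) =
      Nat.pair (seqCode (fun n => w (2*n)) ((k-2)/2)) (seqCode (fun n => y (n+3)) ((k-2)/2)) := by
  rw [hA0, if_pos, hEA_eval hk]
  rw [Nat.unpair_pair]
  simp only [plen_seqCode]
  exact ⟨hk, by rw [pget_seqCode y (by omega)]; exact hs⟩

theorem hA0_nosel (hk : 3 ≤ k) (hs : y 0 ≠ 0) :
    hA0 (Nat.pair (seqCode w k) (seqCode y k)) = Nat.pair e0 e0 := by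
  rw [hA0, if_neg]
  rw [Nat.unpair_pair]
  simp only [plen_seqCode]
  rw [pget_seqCode y (by omega : (0:ℕ) < k)]
  exact fun h => hs h.2

theorem hF_small (hk : k ≤ 2) :
    hF (Nat.pair (seqCode w k) (seqCode y k)) = 1 := by
  rw [hF, if_pos]
  rw [Nat.unpair_pair]
  simp only [plen_seqCode]
  exact hk

theorem hF_eval0 (hk : 3 ≤ k) (ht : y 0 = 0) :
    hF (Nat.pair (seqCode w k) (seqCode y k)) = 1 ↔ ∀ i < k, i % 2 = 1 → w i = 1 := by
  rw [hF, Nat.unpair_pair]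
  simp only [plen_seqCode]
  rw [if_neg (by omega), if_pos (by rw [pget_seqCode y (by omega : (0:ℕ) < k)]; exact ht),
    prodUpto_eq_one]
  constructor
  · intro h i hi hodd
    have := h i hi
    rw [pget_seqCode w hi] at this
    by_contra hne
    rw [if_pos ⟨hodd, hne⟩] at this
    exact absurd this (by omega)
  · intro h i hi
    rw [pget_seqCode w hi, if_neg]
    rintro ⟨hodd, hne⟩
    exact hne (h i hi hodd)

theorem hF_eval1 (hk : 3 ≤ k) (ht : y 0 = 1) :
    hF (Nat.pair (seqCode w k) (seqCode y k)) = 1 ↔ ∀ i < k, i % 2 = 1 → w i = 0 := by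
  rw [hF, Nat.unpair_pair]
  simp only [plen_seqCode]
  rw [if_neg (by omega), if_neg (by rw [pget_seqCode y (by omega : (0:ℕ) < k)]; omega),
    if_pos (by rw [pget_seqCode y (by omega : (0:ℕ) < k)]; exact ht), prodUpto_eq_one]
  constructor
  · intro h i hi hodd
    have := h i hi
    rw [pget_seqCode w hi] at this
    by_contra hne
    rw [if_pos ⟨hodd, hne⟩] at this
    exact absurd this (by omega)
  · intro h i hi
    rw [pget_seqCode w hi, if_neg]
    rintro ⟨hodd, hne⟩
    exact hne (h i hi hodd)

theorem hF_eval2 (hk : 3 ≤ k) (ht0 : y 0 ≠ 0) (ht1 : y 0 ≠ 1) :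
    hF (Nat.pair (seqCode w k) (seqCode y k)) = 1 ↔
      (¬(2 * y 1 + 1 < k ∧ w (2 * y 1 + 1) = 1)) ∧
      (¬(2 * y 2 + 1 < k ∧ w (2 * y 2 + 1) = 0)) := by
  rw [hF, Nat.unpair_pair]
  simp only [plen_seqCode]
  rw [if_neg (by omega), if_neg (by rw [pget_seqCode y (by omega : (0:ℕ) < k)]; exact ht0),
    if_neg (by rw [pget_seqCode y (by omega : (0:ℕ) < k)]; exact ht1)]
  rw [pget_seqCode y (by omega : (1:ℕ) < k), pget_seqCode y (by omega : (2:ℕ) < k)]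
  constructor
  · intro h
    have h1 := Nat.eq_one_of_mul_eq_one_right h
    have h2 := Nat.eq_one_of_mul_eq_one_left h
    rw [ite01_eq_one] at h1 h2
    constructor
    · intro hc
      exact h1 ⟨hc.1, by rw [pget_seqCode w hc.1]; exact hc.2⟩
    · intro hc
      exact h2 ⟨hc.1, by rw [pget_seqCode w hc.1]; exact hc.2⟩
  · rintro ⟨h1, h2⟩
    rw [ite01_eq_one.2, ite01_eq_one.2]
    · rintro ⟨hlt, heq⟩
      exact h2 ⟨hlt, by rw [pget_seqCode w hlt] at heq; exact heq⟩
    · rintro ⟨hlt, heq⟩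
      exact h1 ⟨hlt, by rw [pget_seqCode w hlt] at heq; exact heq⟩

end CographCodes

section ApplyCodes

-- data for computing the graph of `f x` for constant `x = fun _ => d`
def kJ (m : ℕ) : ℕ := plen (Nat.unpair m).2 / 2

def kA (m : ℕ) : ℕ :=
  Nat.pair (seqCode (fun i => pget (Nat.unpair m).2 (2*i)) (kJ m))
    (seqCode (fun i => pget (Nat.unpair m).2 (2*i+1)) (kJ m))

def kF (d t : ℕ) (m : ℕ) : ℕ :=
  prodUpto (fun i => if 4*i < plen (Nat.unpair m).2 ∧ pget (Nat.unpair m).2 (4*i) ≠ d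
      then 0 else 1) (plen (Nat.unpair m).2) *
  (if 4 * (Nat.unpair (Nat.unpair m).1).1 + 2 < plen (Nat.unpair m).2 ∧
      ((pget (Nat.unpair m).2 (4 * (Nat.unpair (Nat.unpair m).1).1 + 2) =
        (Nat.unpair (Nat.unpair m).1).2) ↔ t = 0) then 0 else 1)

private theorem pr_b2 : Primrec fun m => (Nat.unpair m).2 := Primrec.snd.comp Primrec.unpair
private theorem pr_plen_b : Primrec fun m => plen (Nat.unpair m).2 := primrec_plen.comp pr_b2

theorem primrec_kJ : Primrec kJ := Primrec.nat_div.comp pr_plen_b (Primrec.const 2)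

theorem primrec_kA : Primrec kA :=
  Primrec₂.natPair.comp
    (primrec_seqCode
      ((primrec_pget.comp (pr_b2.comp Primrec.fst)
        (Primrec.nat_mul.comp (Primrec.const 2) Primrec.snd)).to₂) primrec_kJ)
    (primrec_seqCode
      ((primrec_pget.comp (pr_b2.comp Primrec.fst)
        (Primrec.succ.comp (Primrec.nat_mul.comp (Primrec.const 2) Primrec.snd))).to₂) primrec_kJ)

theorem primrec_kF (d t : ℕ) : Primrec (kF d t) := by
  have hq : Primrec fun m => 4 * (Nat.unpair (Nat.unpair m).1).1 + 2 :=
    Primrec.nat_add.comp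
      (Primrec.nat_mul.comp (Primrec.const 4)
        (Primrec.fst.comp (Primrec.unpair.comp (Primrec.fst.comp Primrec.unpair))))
      (Primrec.const 2)
  have hr : Primrec fun m => (Nat.unpair (Nat.unpair m).1).2 :=
    Primrec.snd.comp (Primrec.unpair.comp (Primrec.fst.comp Primrec.unpair))
  refine Primrec.nat_mul.comp ?_ ?_
  · refine primrec_prodUpto ?_ pr_plen_b
    refine Primrec.ite ?_ (Primrec.const 0) (Primrec.const 1)
    exact (Primrec.nat_lt.comp (Primrec.nat_mul.comp (Primrec.const 4) Primrec.snd)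
        (pr_plen_b.comp Primrec.fst)).and
      ((Primrec.eq.comp
        (primrec_pget.comp (pr_b2.comp Primrec.fst)
          (Primrec.nat_mul.comp (Primrec.const 4) Primrec.snd))
        (Primrec.const d)).not)
  · refine Primrec.ite ?_ (Primrec.const 0) (Primrec.const 1)
    refine (Primrec.nat_lt.comp hq pr_plen_b).and ?_
    have hbase : PrimrecPred fun m => pget (Nat.unpair m).2 (4 * (Nat.unpair (Nat.unpair m).1).1 + 2) =
        (Nat.unpair (Nat.unpair m).1).2 :=
      Primrec.eq.comp (primrec_pget.comp pr_b2 hq) hr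
    by_cases ht : t = 0
    · subst ht
      exact hbase.of_eq fun m => by simp
    · exact (hbase.not).of_eq fun m => by simp [ht]

theorem kA_eval (n k : ℕ) (y : ℕ → ℕ) :
    kA (Nat.pair n (seqCode y k)) =
      Nat.pair (seqCode (fun i => y (2*i)) (k/2)) (seqCode (fun i => y (2*i+1)) (k/2)) := by
  rw [kA, Nat.unpair_pair]
  simp only [plen_seqCode, kJ, Nat.unpair_pair]
  congr 1
  · exact seqCode_congr fun i hi => pget_seqCode y (by omega)
  · exact seqCode_congr fun i hi => pget_seqCode y (by omega)

theorem kF_eval (d t n k : ℕ) (y : ℕ → ℕ) :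
    kF d t (Nat.pair n (seqCode y k)) = 1 ↔
      ((∀ i, 4*i < k → y (4*i) = d) ∧
       ¬(4 * (Nat.unpair n).1 + 2 < k ∧
         ((y (4 * (Nat.unpair n).1 + 2) = (Nat.unpair n).2) ↔ t = 0))) := by
  rw [kF, Nat.unpair_pair]
  simp only [plen_seqCode]
  constructor
  · intro h
    have h1 := Nat.eq_one_of_mul_eq_one_right h
    have h2 := Nat.eq_one_of_mul_eq_one_left h
    rw [prodUpto_eq_one] at h1
    rw [ite01_eq_one] at h2
    constructor
    · intro i hi
      have := h1 i (by omega)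
      by_contra hne
      rw [if_pos ⟨hi, by rw [pget_seqCode y hi]; exact hne⟩] at this
      exact absurd this (by omega)
    · intro hc
      exact h2 ⟨hc.1, by rw [pget_seqCode y hc.1]; exact hc.2⟩
  · rintro ⟨h1, h2⟩
    have e1 : prodUpto (fun i => if 4*i < k ∧ pget (seqCode y k) (4*i) ≠ d then 0 else 1) k = 1 := by
      rw [prodUpto_eq_one]
      intro i hi
      rw [if_neg]
      rintro ⟨hlt, hne⟩
      rw [pget_seqCode y hlt] at hne
      exact hne (h1 i hlt)
    rw [e1, ite01_eq_one.2, Nat.mul_one]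
    rintro ⟨hlt, heq⟩
    rw [pget_seqCode y hlt] at heq
    exact h2 ⟨hlt, heq⟩

end ApplyCodes


theorem notmem_graphSet_iff {X : Set (ℕ → ℕ)} {F : (ℕ → ℕ) → ℕ → ℕ}
    (h1 : ∀ x ∈ X, F x = fun _ => 1) (h0 : ∀ x ∉ X, F x = fun _ => 0) (w : ℕ → ℕ) :
    (¬∃ x, w = join2 x (F x)) ↔
      (((∀ n, w (2*n+1) = 1) ∧ (fun n => w (2*n)) ∉ X) ∨
       ((∀ n, w (2*n+1) = 0) ∧ (fun n => w (2*n)) ∈ X) ∨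
       ((¬∀ n, w (2*n+1) = 1) ∧ (¬∀ n, w (2*n+1) = 0))) := by
  classical
  have hc : ¬((∀ n, w (2*n+1) = 1) ∧ (∀ n, w (2*n+1) = 0)) := by
    rintro ⟨a, b⟩
    have ha := a 0
    have hb := b 0
    omega
  rw [mem_graphSet_iff h1 h0]
  tauto

theorem hypFunIn_indicator (z : ℕ → ℕ) {X : Set (ℕ → ℕ)} (hXd : Delta11SetIn z X)
    (hne : X.Nonempty) (hne' : Xᶜ.Nonempty) {F : (ℕ → ℕ) → ℕ → ℕ}
    (h1 : ∀ x ∈ X, F x = fun _ => 1) (h0 : ∀ x ∉ X, F x = fun _ => 0) :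
    HypFunIn z F := by
  classical
  obtain ⟨⟨c₁, hc₁⟩, c₂, hc₂⟩ := hXd
  have base₁ : c₁.eval z (Nat.pair e0 e0) = Part.some 1 := base_eval hc₁ hne
  have base₂ : c₂.eval z (Nat.pair e0 e0) = Part.some 1 := base_eval hc₂ hne'
  constructor
  · -- the Σ¹₁ code for the graph
    obtain ⟨d, hd⟩ := ocode_combine z c₁ c₂ primrec_gA1 primrec_gA0 primrec_gF
    refine ⟨d, fun w => ?_⟩
    rw [Set.mem_setOf_eq, mem_graphSet_iff h1 h0]
    constructor
    · rintro (⟨hodd, hX⟩ | ⟨hodd, hX⟩)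
      · obtain ⟨y, hy⟩ := (hc₁ _).1 hX
        refine ⟨y, fun k => ?_⟩
        rw [hd]
        rcases le_or_gt k 1 with hk | hk
        · rw [gA1_small hk, gA0_small hk, gF_small hk]
          exact ⟨base₁, base₂, rfl⟩
        · have hk2 : 2 ≤ k := hk
          have hw1 : w 1 = 1 := by have := hodd 0; simpa using this
          rw [gA1_sel hk2 hw1, gA0_nosel hk2 (by omega)]
          refine ⟨hy _, base₂, (gF_eval hk2).2 ⟨by omega, fun i hi hoddi => ?_⟩⟩
          have := hodd (i/2)
          rw [show 2*(i/2)+1 = i by omega] at this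
          omega
      · have hXc : (fun n => w (2*n)) ∈ Xᶜ := hX
        obtain ⟨y, hy⟩ := (hc₂ _).1 hXc
        refine ⟨y, fun k => ?_⟩
        rw [hd]
        rcases le_or_gt k 1 with hk | hk
        · rw [gA1_small hk, gA0_small hk, gF_small hk]
          exact ⟨base₁, base₂, rfl⟩
        · have hk2 : 2 ≤ k := hk
          have hw1 : w 1 = 0 := by have := hodd 0; simpa using this
          rw [gA0_sel hk2 hw1, gA1_nosel hk2 (by omega)]
          refine ⟨base₁, hy _, (gF_eval hk2).2 ⟨by omega, fun i hi hoddi => ?_⟩⟩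
          have := hodd (i/2)
          rw [show 2*(i/2)+1 = i by omega] at this
          omega
    · rintro ⟨y, hy⟩
      have hgF : ∀ k, 2 ≤ k → (w 1 ≤ 1 ∧ ∀ i < k, i % 2 = 1 → w i = w 1) :=
        fun k hk => (gF_eval hk).1 ((hd _).1 (hy k)).2.2
      have hw1 : w 1 ≤ 1 := (hgF 2 le_rfl).1
      have hodd : ∀ n, w (2*n+1) = w 1 :=
        fun n => (hgF (2*n+2) (by omega)).2 (2*n+1) (by omega) (by omega)
      rcases (by omega : w 1 = 1 ∨ w 1 = 0) with hs | hs
      · left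
        refine ⟨fun n => by rw [hodd n, hs], ?_⟩
        refine (hc₁ _).2 ⟨y, fun j => ?_⟩
        rcases Nat.eq_zero_or_pos j with rfl | hj
        · have h0' := ((hd _).1 (hy 0)).1
          rw [gA1_small (by omega)] at h0'
          rw [seqCode_zero' (fun n => w (2*n)), seqCode_zero' y]
          exact h0'
        · have h' := ((hd _).1 (hy (2*j))).1
          rw [gA1_sel (by omega) hs] at h'
          rw [show (2*j+1)/2 = j by omega] at h'
          exact h'
      · right
        refine ⟨fun n => by rw [hodd n, hs], ?_⟩
        have : (fun n => w (2*n)) ∈ Xᶜ := by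
          refine (hc₂ _).2 ⟨y, fun j => ?_⟩
          rcases Nat.eq_zero_or_pos j with rfl | hj
          · have h0' := ((hd _).1 (hy 0)).2.1
            rw [gA0_small (by omega)] at h0'
            rw [seqCode_zero' (fun n => w (2*n)), seqCode_zero' y]
            exact h0'
          · have h' := ((hd _).1 (hy (2*j))).2.1
            rw [gA0_sel (by omega) hs] at h'
            rw [show (2*j+1)/2 = j by omega] at h'
            exact h'
        exact this
  · -- the Σ¹₁ code for the complement of the graph
    obtain ⟨d, hd⟩ := ocode_combine z c₁ c₂ primrec_hA1 primrec_hA0 primrec_hF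
    refine ⟨d, fun w => ?_⟩
    rw [Set.mem_compl_iff, Set.mem_setOf_eq]
    rw [show ¬(∃ x, w = join2 x (F x)) ↔ _ from notmem_graphSet_iff h1 h0 w]
    constructor
    · rintro (⟨hodd, hX⟩ | ⟨hodd, hX⟩ | ⟨hn1, hn0⟩)
      · -- odds ≡ 1, even part not in X : selector 0
        obtain ⟨y', hy'⟩ := (hc₂ _).1 (hX : (fun n => w (2*n)) ∈ Xᶜ)
        set y : ℕ → ℕ := fun m => if m < 3 then 0 else y' (m - 3) with hydef
        have hsh : (fun n => y (n+3)) = y' := by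
          funext n
          simp only [hydef]
          rw [if_neg (by omega)]
          congr 1
        refine ⟨y, fun k => ?_⟩
        rw [hd]
        rcases le_or_gt k 2 with hk | hk
        · rw [hA1_small hk, hA0_small hk, hF_small hk]
          exact ⟨base₁, base₂, rfl⟩
        · have hk3 : 3 ≤ k := hk
          have hy0 : y 0 = 0 := by simp [hydef]
          rw [hA1_nosel hk3 (by omega), hA0_sel hk3 hy0, hsh]
          refine ⟨base₁, hy' _, (hF_eval0 hk3 hy0).2 fun i hi hoddi => ?_⟩
          have := hodd (i/2)
          rw [show 2*(i/2)+1 = i by omega] at this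
          exact this
      · -- odds ≡ 0, even part in X : selector 1
        obtain ⟨y', hy'⟩ := (hc₁ _).1 hX
        set y : ℕ → ℕ := fun m => if m = 0 then 1 else if m < 3 then 0 else y' (m - 3) with hydef
        have hsh : (fun n => y (n+3)) = y' := by
          funext n
          simp only [hydef]
          rw [if_neg (by omega), if_neg (by omega)]
          congr 1
        refine ⟨y, fun k => ?_⟩
        rw [hd]
        rcases le_or_gt k 2 with hk | hk
        · rw [hA1_small hk, hA0_small hk, hF_small hk]
          exact ⟨base₁, base₂, rfl⟩
        · have hk3 : 3 ≤ k := hk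
          have hy0 : y 0 = 1 := by simp [hydef]
          rw [hA1_sel hk3 hy0, hA0_nosel hk3 (by omega), hsh]
          refine ⟨hy' _, base₂, (hF_eval1 hk3 hy0).2 fun i hi hoddi => ?_⟩
          have := hodd (i/2)
          rw [show 2*(i/2)+1 = i by omega] at this
          exact this
      · -- odds neither constant 1 nor constant 0 : selector 2
        obtain ⟨n₁, hn₁⟩ := not_forall.1 hn1
        obtain ⟨n₀, hn₀⟩ := not_forall.1 hn0
        set y : ℕ → ℕ := fun m => if m = 0 then 2 else if m = 1 then n₁ else if m = 2 then n₀ else 0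
          with hydef
        have hy0 : y 0 = 2 := by simp [hydef]
        have hy1 : y 1 = n₁ := by simp [hydef]
        have hy2 : y 2 = n₀ := by simp [hydef]
        refine ⟨y, fun k => ?_⟩
        rw [hd]
        rcases le_or_gt k 2 with hk | hk
        · rw [hA1_small hk, hA0_small hk, hF_small hk]
          exact ⟨base₁, base₂, rfl⟩
        · have hk3 : 3 ≤ k := hk
          rw [hA1_nosel hk3 (by omega), hA0_nosel hk3 (by omega)]
          refine ⟨base₁, base₂, (hF_eval2 hk3 (by omega) (by omega)).2 ⟨?_, ?_⟩⟩
          · rw [hy1]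
            rintro ⟨-, h⟩
            exact hn₁ h
          · rw [hy2]
            rintro ⟨-, h⟩
            exact hn₀ h
    · rintro ⟨y, hy⟩
      by_cases ht0 : y 0 = 0
      · left
        have hP1 : ∀ n, w (2*n+1) = 1 := by
          intro n
          have h' := ((hd _).1 (hy (2*n+3))).2.2
          exact (hF_eval0 (by omega) ht0).1 h' (2*n+1) (by omega) (by omega)
        refine ⟨hP1, ?_⟩
        have : (fun n => w (2*n)) ∈ Xᶜ := by
          refine (hc₂ _).2 ⟨fun n => y (n+3), fun j => ?_⟩
          rcases Nat.eq_zero_or_pos j with rfl | hj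
          · have h0' := ((hd _).1 (hy 0)).2.1
            rw [hA0_small (by omega)] at h0'
            rw [seqCode_zero' (fun n => w (2*n)), seqCode_zero' (fun n => y (n+3))]
            exact h0'
          · have h' := ((hd _).1 (hy (2*j+2))).2.1
            rw [hA0_sel (by omega) ht0] at h'
            rw [show (2*j+2-2)/2 = j by omega] at h'
            exact h'
        exact this
      · by_cases ht1 : y 0 = 1
        · right; left
          have hP0 : ∀ n, w (2*n+1) = 0 := by
            intro n
            have h' := ((hd _).1 (hy (2*n+3))).2.2
            exact (hF_eval1 (by omega) ht1).1 h' (2*n+1) (by omega) (by omega)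
          refine ⟨hP0, ?_⟩
          refine (hc₁ _).2 ⟨fun n => y (n+3), fun j => ?_⟩
          rcases Nat.eq_zero_or_pos j with rfl | hj
          · have h0' := ((hd _).1 (hy 0)).1
            rw [hA1_small (by omega)] at h0'
            rw [seqCode_zero' (fun n => w (2*n)), seqCode_zero' (fun n => y (n+3))]
            exact h0'
          · have h' := ((hd _).1 (hy (2*j+2))).1
            rw [hA1_sel (by omega) ht1] at h'
            rw [show (2*j+2-2)/2 = j by omega] at h'
            exact h'
        · right; right
          constructor
          · intro hall
            have h' := ((hd _).1 (hy (2*y 1+3))).2.2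
            have := ((hF_eval2 (by omega) ht0 ht1).1 h').1
            exact this ⟨by omega, hall (y 1)⟩
          · intro hall
            have h' := ((hd _).1 (hy (2*y 2+3))).2.2
            have := ((hF_eval2 (by omega) ht0 ht1).1 h').2
            exact this ⟨by omega, hall (y 2)⟩


theorem hypIn_apply (z : ℕ → ℕ) {f : (ℕ → ℕ) → ℕ → ℕ}
    (hf : Sigma11SetIn z {w | ∃ x : ℕ → ℕ, w = join2 x (f x)}) (d : ℕ) :
    HypIn z (f (fun _ => d)) := by
  classical
  obtain ⟨c, hc⟩ := hf
  have hw0 : join2 (fun _ => d) (f (fun _ => d)) ∈ {w | ∃ x : ℕ → ℕ, w = join2 x (f x)} :=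
    ⟨fun _ => d, rfl⟩
  obtain ⟨y0, hy0⟩ := (hc _).1 hw0
  have key : ∀ t n : ℕ,
      (∃ y : ℕ → ℕ, ∀ k,
        (c.eval z (kA (Nat.pair n (seqCode y k))) = Part.some 1 ∧
         kF d t (Nat.pair n (seqCode y k)) = 1)) ↔
      ((f (fun _ => d) (Nat.unpair n).1 = (Nat.unpair n).2) ↔ t ≠ 0) := by
    intro t n
    constructor
    · rintro ⟨y, hy⟩
      have hG : (fun i => y (2*i)) ∈ {w | ∃ x : ℕ → ℕ, w = join2 x (f x)} := by
        refine (hc _).2 ⟨fun i => y (2*i+1), fun j => ?_⟩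
        have h' := (hy (2*j)).1
        rw [kA_eval, show 2*j/2 = j by omega] at h'
        exact h'
      obtain ⟨x', hx'⟩ := hG
      have heven : ∀ i, y (4*i) = d := fun i =>
        ((kF_eval d t n (4*i+1) y).1 (hy (4*i+1)).2).1 i (by omega)
      have hxx : x' = fun _ => d := by
        funext i
        have h1 : (fun i => y (2*i)) (2*i) = x' i := by
          rw [hx']
          exact join2_even x' (f x') i
        have h2 : y (2*(2*i)) = d := by
          rw [show 2*(2*i) = 4*i by ring]
          exact heven i
        rw [← h1]
        exact h2
      have hval : y (4*(Nat.unpair n).1+2) = f (fun _ => d) (Nat.unpair n).1 := by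
        have h1 : y (4*(Nat.unpair n).1+2) = (fun i => y (2*i)) (2*(Nat.unpair n).1+1) := by
          show y _ = y _
          congr 1
          ring
        rw [h1, hx', join2_odd, hxx]
      have hpos := ((kF_eval d t n (4*(Nat.unpair n).1+3) y).1
        (hy (4*(Nat.unpair n).1+3)).2).2
      rw [hval] at hpos
      have hnlt : ¬(f (fun _ => d) (Nat.unpair n).1 = (Nat.unpair n).2 ↔ t = 0) :=
        fun h => hpos ⟨by omega, h⟩
      tauto
    · intro hiff
      refine ⟨join2 (join2 (fun _ => d) (f (fun _ => d))) y0, fun k => ?_⟩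
      have he : (fun i => join2 (join2 (fun _ => d) (f (fun _ => d))) y0 (2*i)) =
          join2 (fun _ => d) (f (fun _ => d)) :=
        funext fun i => join2_even _ _ i
      have ho : (fun i => join2 (join2 (fun _ => d) (f (fun _ => d))) y0 (2*i+1)) = y0 :=
        funext fun i => join2_odd _ _ i
      constructor
      · rw [kA_eval, he, ho]
        exact hy0 (k/2)
      · rw [kF_eval]
        constructor
        · intro i hi
          have h1 : join2 (join2 (fun _ => d) (f (fun _ => d))) y0 (4*i) =
              join2 (fun _ => d) (f (fun _ => d)) (2*i) := by
            rw [show 4*i = 2*(2*i) by ring]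
            exact join2_even _ _ _
          rw [h1, join2_even]
        · rintro ⟨-, hiff'⟩
          have h1 : join2 (join2 (fun _ => d) (f (fun _ => d))) y0 (4*(Nat.unpair n).1+2) =
              f (fun _ => d) (Nat.unpair n).1 := by
            rw [show 4*(Nat.unpair n).1+2 = 2*(2*(Nat.unpair n).1+1) by ring, join2_even,
              join2_odd]
          rw [h1] at hiff'
          tauto
  constructor
  · obtain ⟨c', hc'⟩ := ocode_combine z c c primrec_kA primrec_kA (primrec_kF d 1)
    refine ⟨c', fun n => ?_⟩
    show f (fun _ => d) (Nat.unpair n).1 = (Nat.unpair n).2 ↔ _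
    constructor
    · intro h
      obtain ⟨y, hy⟩ := (key 1 n).2 (by simp [h])
      exact ⟨y, fun k => (hc' _).2 ⟨(hy k).1, (hy k).1, (hy k).2⟩⟩
    · rintro ⟨y, hy⟩
      have h := (key 1 n).1 ⟨y, fun k => ⟨((hc' _).1 (hy k)).1, ((hc' _).1 (hy k)).2.2⟩⟩
      simpa using h
  · obtain ⟨c', hc'⟩ := ocode_combine z c c primrec_kA primrec_kA (primrec_kF d 0)
    refine ⟨c', fun n => ?_⟩
    show ¬(f (fun _ => d) (Nat.unpair n).1 = (Nat.unpair n).2) ↔ _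
    constructor
    · intro h
      obtain ⟨y, hy⟩ := (key 0 n).2 (by simp [h])
      exact ⟨y, fun k => (hc' _).2 ⟨(hy k).1, (hy k).1, (hy k).2⟩⟩
    · rintro ⟨y, hy⟩
      have h := (key 0 n).1 ⟨y, fun k => ⟨((hc' _).1 (hy k)).1, ((hc' _).1 (hy k)).2.2⟩⟩
      simpa using h

/-- For a nonempty `Δ¹₁` set `X` with no hyperarithmetic member, the two-class equivalence
relation `E_X` (classes `X` and `Xᶜ`) is `Δ¹₁`-reducible to `=₂` but not conversely. -/
theorem two_class_relation_strictly_below_eq2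
    (X : Set (ℕ → ℕ)) (hX : Delta11Set X) (hXne : X.Nonempty)
    (hXnohyp : ∀ x ∈ X, ¬ HypReal x) :
    (∃ f : (ℕ → ℕ) → ℕ → ℕ, HypFun f ∧
        ∀ x y, ((x ∈ X ↔ y ∈ X) ↔ Eq2 (f x) (f y))) ∧
      ¬ ∃ f : (ℕ → ℕ) → ℕ → ℕ, HypFun f ∧
        ∀ x y, (Eq2 x y ↔ (f x ∈ X ↔ f y ∈ X)) := by
  classical
  have h0X : (fun _ : ℕ => (0:ℕ)) ∉ X := fun h => hXnohyp _ h (hypIn_const _ 0)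
  have hXc : Xᶜ.Nonempty := ⟨fun _ => 0, h0X⟩
  constructor
  · refine ⟨fun x _ => if x ∈ X then 1 else 0, ?_, ?_⟩
    · exact hypFunIn_indicator _ hX hXne hXc
        (fun x hx => by simp [hx]) (fun x hx => by simp [hx])
    · intro x y
      by_cases hx : x ∈ X <;> by_cases hy : y ∈ X <;>
        simp [Eq2, hx, hy]
  · rintro ⟨f, hf, hred⟩
    have h01 : ¬ Eq2 (fun _ => 0) (fun _ => (1:ℕ)) := by
      rintro (⟨-, h⟩ | ⟨h, -⟩) <;> simp at h
    have hne2 : ¬ (f (fun _ => 0) ∈ X ↔ f (fun _ => 1) ∈ X) :=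
      fun h => h01 ((hred _ _).2 h)
    have hyp0 : HypReal (f (fun _ => 0)) := hypIn_apply _ hf.1 0
    have hyp1 : HypReal (f (fun _ => 1)) := hypIn_apply _ hf.1 1
    by_cases h0 : f (fun _ => 0) ∈ X
    · exact hXnohyp _ h0 hyp0
    · by_cases h1 : f (fun _ => 1) ∈ X
      · exact hXnohyp _ h1 hyp1
      · exact hne2 ⟨fun h => absurd h h0, fun h => absurd h h1⟩
end

section
/- Let E and E' be equivalence relations on ω^ω × 2^ω of the form: (x,y) E (x',y') iff x = x' and (x ∉ A or (x ∈ A and y E₀ y')), and similarly E' with B in place of A, where A, B ⊆ ω^ω. Suppose F : ω^ω × 2^ω → ω^ω × 2^ω is a Baire measurable reduction of E to E' (with respect to a topology in which all sections are Baire spaces) such that the induced map h : ω^ω → ω^ω, defined by h(x) = z iff {y : F(x,y) has first coordinate z} is non-meagre, is total on A. Then h[A] ⊆ B. -/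
/-- The equivalence relation on `ω^ω × 2^ω` attached to a set `A ⊆ ω^ω`:
`(x,y) E (x',y')` iff `x = x'` and (`x ∉ A` or `y E₀ y'`). -/
def ERel (A : Set (ℕ → ℕ)) (p q : (ℕ → ℕ) × (ℕ → Bool)) : Prop :=
  p.1 = q.1 ∧ (p.1 ∉ A ∨ (p.1 ∈ A ∧ E0 p.2 q.2))

/-- Singletons in Cantor space are nowhere dense. -/
lemma singleton_nowhereDense (y : ℕ → Bool) : IsNowhereDense ({y} : Set (ℕ → Bool)) := by
  unfold IsNowhereDense
  rw [closure_singleton]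
  by_contra h
  rw [← Set.not_nonempty_iff_eq_empty] at h
  push_neg at h
  obtain ⟨y', hy'⟩ := h
  have hy'' : y' ∈ ({y} : Set (ℕ → Bool)) := interior_subset hy'
  rw [Set.mem_singleton_iff] at hy''
  subst hy''
  -- sequence flipping coordinate n converges to y'
  set f : ℕ → (ℕ → Bool) := fun n m => if m = n then !(y' m) else y' m with hf
  have htend : Filter.Tendsto f Filter.atTop (nhds y') := by
    rw [tendsto_pi_nhds]
    intro m
    apply Filter.Tendsto.congr' (f₁ := fun _ => y' m)
    · filter_upwards [Filter.eventually_gt_atTop m] with n hn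
      simp [hf, Nat.ne_of_lt hn]
    · exact tendsto_const_nhds
  have := htend.eventually (isOpen_interior.mem_nhds hy')
  obtain ⟨n, hn⟩ := this.exists
  have : f n ∈ ({y'} : Set (ℕ → Bool)) := interior_subset hn
  rw [Set.mem_singleton_iff] at this
  have := congrFun this n
  simp [hf] at this

lemma countable_meagre {s : Set (ℕ → Bool)} (h : s.Countable) : IsMeagre s := by
  rw [isMeagre_iff_countable_union_isNowhereDense]
  refine ⟨(fun y => ({y} : Set (ℕ → Bool))) '' s, ?_, h.image _, ?_⟩
  · rintro t ⟨y, -, rfl⟩; exact singleton_nowhereDense y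
  · intro y hy; exact Set.mem_sUnion.2 ⟨{y}, ⟨y, hy, rfl⟩, rfl⟩

lemma E0_class_countable (y₀ : ℕ → Bool) : {y : ℕ → Bool | E0 y y₀}.Countable := by
  have : {y : ℕ → Bool | E0 y y₀} ⊆
      ⋃ n : ℕ, (fun s : Fin n → Bool => fun m => if h : m < n then s ⟨m, h⟩ else y₀ m) ''
        Set.univ := by
    rintro y ⟨n, hn⟩
    refine Set.mem_iUnion.2 ⟨n, ⟨fun i => y i, Set.mem_univ _, ?_⟩⟩
    funext m
    by_cases h : m < n
    · simp [h]
    · simp [h, hn m (Nat.le_of_not_lt h)]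
  exact Set.Countable.mono this
    (Set.countable_iUnion fun n => (Set.countable_univ_iff.2 inferInstance).image _)

/-- If `F` is a sectionwise Baire measurable reduction of `E_A` to `E_B`, then the induced
map `h` (where `h x = z` iff `{y | F(x,y) has first coordinate z}` is non-meagre), assumed
total on `A`, maps `A` into `B`. -/
theorem induced_map_of_reduction_maps_A_into_B
    (A B : Set (ℕ → ℕ))
    (F : (ℕ → ℕ) × (ℕ → Bool) → (ℕ → ℕ) × (ℕ → Bool))
    (hBaire : ∀ x ∈ A, ∀ U : Set ((ℕ → ℕ) × (ℕ → Bool)), IsOpen U →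
      BaireMeasurableSet {y : ℕ → Bool | F (x, y) ∈ U})
    (hred : ∀ p q, ERel A p q ↔ ERel B (F p) (F q))
    (htotal : ∀ x ∈ A, ∃ z : ℕ → ℕ, ¬ IsMeagre {y : ℕ → Bool | (F (x, y)).1 = z}) :
    ∀ x ∈ A, ∀ z : ℕ → ℕ, ¬ IsMeagre {y : ℕ → Bool | (F (x, y)).1 = z} → z ∈ B := by
  intro x hx z hnm
  by_contra hzB
  apply hnm
  -- the set is nonempty since non-meagre sets are nonempty (∅ is meagre)... but we don't need
  -- nonemptiness for meagreness if empty
  rcases Set.eq_empty_or_nonempty {y : ℕ → Bool | (F (x, y)).1 = z} with he | ⟨y₀, hy₀⟩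
  · rw [he]; exact IsMeagre.empty
  · have hsub : {y : ℕ → Bool | (F (x, y)).1 = z} ⊆ {y | E0 y y₀} := by
      intro y hy
      have hE' : ERel B (F (x, y)) (F (x, y₀)) := by
        refine ⟨hy.trans hy₀.symm, Or.inl ?_⟩
        rw [hy]; exact hzB
      have hE : ERel A (x, y) (x, y₀) := (hred (x, y) (x, y₀)).mpr hE'
      rcases hE.2 with h | h
      · exact absurd hx h
      · exact h.2
    exact countable_meagre (Set.Countable.mono hsub (E0_class_countable y₀))
end

section
/- Let F ⊆ ω^ω be an uncountable set such that no element of F is Δ¹₁(z) for a fixed real z, and define the equivalence relation E on ω^ω by x E y iff (x ∉ F and y ∉ F) or (x, y ∈ F and x = y). Then there is no Δ¹₁(z) function f : 2^ω → ω^ω reducing equality on 2^ω to E. -/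
/-- A function `2^ω → ω^ω` is `Δ¹₁` in `z` if its graph is. -/
def HypFunCIn (z : ℕ → ℕ) (f : (ℕ → Bool) → ℕ → ℕ) : Prop :=
  Delta11SetIn z {w | ∃ x : ℕ → Bool, w = join2 (fun n => cond (x n) 1 0) (f x)}

namespace NoHypAux

open Encodable

theorem pfun_bind_some (a : ℕ) (g : ℕ →. ℕ) : Part.some a >>= g = g a := Part.bind_some a g

theorem pfun_bind_eq_bind (x : Part ℕ) (g : ℕ →. ℕ) : x >>= g = x.bind g := Part.bind_eq_bind x g

theorem pfun_bind_map (f : ℕ → ℕ) (x : Part ℕ) (g : ℕ →. ℕ) :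
    (x.map f).bind g = x.bind fun y => g (f y) := Part.bind_map f x g

/-- Every partial recursive function has an oracle code (ignoring the oracle). -/
theorem exists_ocode {f : ℕ →. ℕ} (hf : Nat.Partrec f) :
    ∃ c : OCode, ∀ z, c.eval z = f := by
  induction hf with
  | zero => exact ⟨.zero, fun z => rfl⟩
  | succ => exact ⟨.succ, fun z => rfl⟩
  | left => exact ⟨.left, fun z => rfl⟩
  | right => exact ⟨.right, fun z => rfl⟩
  | pair hf hg ihf ihg =>
      obtain ⟨cf, hcf⟩ := ihf; obtain ⟨cg, hcg⟩ := ihg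
      exact ⟨.pair cf cg, fun z => by funext n; simp [OCode.eval, hcf, hcg]⟩
  | comp hf hg ihf ihg =>
      obtain ⟨cf, hcf⟩ := ihf; obtain ⟨cg, hcg⟩ := ihg
      exact ⟨.comp cf cg, fun z => by funext n; simp [OCode.eval, hcf, hcg]⟩
  | prec hf hg ihf ihg =>
      obtain ⟨cf, hcf⟩ := ihf; obtain ⟨cg, hcg⟩ := ihg
      exact ⟨.prec cf cg, fun z => by funext n; simp [OCode.eval, hcf, hcg, Nat.unpaired]⟩
  | rfind hf ih =>
      obtain ⟨cf, hcf⟩ := ih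
      refine ⟨.rfind (.comp cf (.pair .right .left)), fun z => ?_⟩
      funext n
      simp [OCode.eval, hcf, Seq.seq, pfun_bind_some]

theorem primrec_ocode {h : ℕ → ℕ} (hh : Primrec h) :
    ∃ c : OCode, ∀ z n, c.eval z n = Part.some (h n) := by
  obtain ⟨c, hc⟩ := exists_ocode (Partrec.nat_iff.1 hh.to_comp)
  exact ⟨c, fun z n => by rw [hc]; rfl⟩

/-- Decode a natural number as a list of naturals. -/
def listOf (s : ℕ) : List ℕ := (Encodable.decode (α := List ℕ) s).getD []

theorem primrec_listOf : Primrec listOf :=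
  Primrec.option_getD.comp Primrec.decode (Primrec.const [])

@[simp] theorem listOf_encode (l : List ℕ) : listOf (Encodable.encode l) = l := by
  simp [listOf]

/-- The preprocessing function: split the coded initial segment into evens and odds. -/
def prepFun (m : ℕ) : ℕ :=
  let L := listOf m.unpair.2
  Nat.pair (Encodable.encode ((List.range (L.length / 2)).map fun j => L.getD (2 * j) 0))
           (Encodable.encode ((List.range (L.length / 2)).map fun j => L.getD (2 * j + 1) 0))

theorem primrec_prepFun : Primrec prepFun := by
  have hL : Primrec fun m : ℕ => listOf m.unpair.2 :=
    primrec_listOf.comp (Primrec.snd.comp Primrec.unpair)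
  have ht : Primrec fun m : ℕ => (listOf m.unpair.2).length / 2 :=
    Primrec.nat_div.comp (Primrec.list_length.comp hL) (Primrec.const 2)
  have hr : Primrec fun m : ℕ => List.range ((listOf m.unpair.2).length / 2) :=
    Primrec.list_range.comp ht
  have h1 : Primrec fun m : ℕ =>
      (List.range ((listOf m.unpair.2).length / 2)).map fun j => (listOf m.unpair.2).getD (2 * j) 0 :=
    Primrec.list_map hr <|
      (Primrec.list_getD 0).comp (hL.comp Primrec.fst)
        (Primrec.nat_mul.comp (Primrec.const 2) Primrec.snd)
  have h2 : Primrec fun m : ℕ =>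
      (List.range ((listOf m.unpair.2).length / 2)).map fun j => (listOf m.unpair.2).getD (2 * j + 1) 0 :=
    Primrec.list_map hr <|
      (Primrec.list_getD 0).comp (hL.comp Primrec.fst)
        (Primrec.succ.comp (Primrec.nat_mul.comp (Primrec.const 2) Primrec.snd))
  exact Primrec₂.natPair.comp (Primrec.encode.comp h1) (Primrec.encode.comp h2)

/-- The checking function. -/
def checkFun (e : ℕ) (neg : Bool) (m : ℕ) : ℕ :=
  let L := listOf m.unpair.2
  if L.length = 0 then 1
  else if (L.length - 1) % 4 = 0 then (if L.getD (L.length - 1) 0 = e then 1 else 0)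
  else if L.length - 1 = 4 * m.unpair.1.unpair.1 + 2 then
    (if neg then (if L.getD (L.length - 1) 0 = m.unpair.1.unpair.2 then 0 else 1)
     else (if L.getD (L.length - 1) 0 = m.unpair.1.unpair.2 then 1 else 0))
  else 1

theorem primrec_checkFun (e : ℕ) (neg : Bool) : Primrec (checkFun e neg) := by
  have hL : Primrec fun m : ℕ => listOf m.unpair.2 :=
    primrec_listOf.comp (Primrec.snd.comp Primrec.unpair)
  have hlen : Primrec fun m : ℕ => (listOf m.unpair.2).length := Primrec.list_length.comp hL
  have hi : Primrec fun m : ℕ => (listOf m.unpair.2).length - 1 :=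
    Primrec.nat_sub.comp hlen (Primrec.const 1)
  have ha : Primrec fun m : ℕ => (listOf m.unpair.2).getD ((listOf m.unpair.2).length - 1) 0 :=
    (Primrec.list_getD 0).comp hL hi
  have hu : Primrec fun m : ℕ => (Nat.unpair m.unpair.1).1 :=
    (Primrec.fst.comp Primrec.unpair).comp (Primrec.fst.comp Primrec.unpair)
  have hv : Primrec fun m : ℕ => (Nat.unpair m.unpair.1).2 :=
    (Primrec.snd.comp Primrec.unpair).comp (Primrec.fst.comp Primrec.unpair)
  have hinner : Primrec fun m : ℕ =>
      (if neg then (if (listOf m.unpair.2).getD ((listOf m.unpair.2).length - 1) 0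
            = (Nat.unpair m.unpair.1).2 then 0 else 1)
       else (if (listOf m.unpair.2).getD ((listOf m.unpair.2).length - 1) 0
            = (Nat.unpair m.unpair.1).2 then 1 else 0) : ℕ) := by
    cases neg <;> simp only [Bool.false_eq_true, if_false, if_true] <;>
      exact Primrec.ite (Primrec.eq.comp ha hv) (Primrec.const _) (Primrec.const _)
  exact Primrec.ite (Primrec.eq.comp hlen (Primrec.const 0)) (Primrec.const 1) <|
    Primrec.ite (Primrec.eq.comp (Primrec.nat_mod.comp hi (Primrec.const 4)) (Primrec.const 0))
      (Primrec.ite (Primrec.eq.comp ha (Primrec.const e)) (Primrec.const 1) (Primrec.const 0)) <|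
      Primrec.ite
        (Primrec.eq.comp hi
          (Primrec.succ.comp (Primrec.succ.comp (Primrec.nat_mul.comp (Primrec.const 4) hu))))
        hinner (Primrec.const 1)

theorem primrec_mulFun : Primrec fun m : ℕ => m.unpair.1 * m.unpair.2 :=
  Primrec.nat_mul.comp (Primrec.fst.comp Primrec.unpair) (Primrec.snd.comp Primrec.unpair)

/-- Assemble the combined code. -/
theorem combined_code (c : OCode) (e : ℕ) (neg : Bool) :
    ∃ c' : OCode, ∀ z m,
      c'.eval z m = (c.eval z (prepFun m)).map fun v => checkFun e neg m * v := by
  obtain ⟨cp, hcp⟩ := primrec_ocode primrec_prepFun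
  obtain ⟨cc, hcc⟩ := primrec_ocode (primrec_checkFun e neg)
  obtain ⟨cm, hcm⟩ := primrec_ocode primrec_mulFun
  refine ⟨.comp cm (.pair cc (.comp c cp)), fun z m => ?_⟩
  have h1 : (OCode.pair cc (OCode.comp c cp)).eval z m
      = Part.map (fun v => Nat.pair (checkFun e neg m) v) (c.eval z (prepFun m)) := by
    show Nat.pair <$> cc.eval z m <*> (cp.eval z m >>= c.eval z) = _
    rw [seq_eq_bind_map, hcc z m, hcp z m]
    simp only [Part.bind_eq_bind, Part.bind_some, Part.map_eq_map, Part.map_some, pfun_bind_some]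
  show (OCode.pair cc (OCode.comp c cp)).eval z m >>= cm.eval z = _
  rw [pfun_bind_eq_bind, h1, pfun_bind_map]
  have h2 : ∀ v : ℕ, cm.eval z (Nat.pair (checkFun e neg m) v)
      = Part.some (checkFun e neg m * v) := fun v => by rw [hcm]; simp
  simp only [h2]
  exact Part.bind_some_eq_map _ _

theorem getD_rangeMap (Y : ℕ → ℕ) {i k : ℕ} (h : i < k) :
    ((List.range k).map Y).getD i 0 = Y i := by
  rw [List.getD_eq_getElem] <;> simp [h]

theorem join2_even (a b : ℕ → ℕ) (j : ℕ) : join2 a b (2 * j) = a j := by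
  unfold join2; rw [if_pos (by omega)]; congr 1; omega

theorem join2_odd (a b : ℕ → ℕ) (j : ℕ) : join2 a b (2 * j + 1) = b j := by
  unfold join2; rw [if_neg (by omega)]; congr 1; omega

theorem length_listOf_seqCode (Y : ℕ → ℕ) (k : ℕ) : (listOf (seqCode Y k)).length = k := by
  simp [seqCode]

theorem prepFun_eq (n : ℕ) (Y : ℕ → ℕ) (k : ℕ) :
    prepFun (Nat.pair n (seqCode Y k)) =
      Nat.pair (seqCode (fun j => Y (2 * j)) (k / 2)) (seqCode (fun j => Y (2 * j + 1)) (k / 2)) := by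
  unfold prepFun seqCode
  simp only [Nat.unpair_pair, seqCode, listOf_encode, List.length_map, List.length_range]
  congr 2 <;> refine List.map_congr_left fun j hj => ?_ <;>
    rw [List.mem_range] at hj <;> exact getD_rangeMap Y (by omega)

/-- Characterization of the check at a genuine initial segment. -/
theorem checkFun_eq (e : ℕ) (neg : Bool) (n : ℕ) (Y : ℕ → ℕ) (k : ℕ) :
    checkFun e neg (Nat.pair n (seqCode Y k)) =
      if k = 0 then 1
      else if (k - 1) % 4 = 0 then (if Y (k - 1) = e then 1 else 0)
      else if k - 1 = 4 * n.unpair.1 + 2 then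
        (if neg then (if Y (k - 1) = n.unpair.2 then 0 else 1)
         else (if Y (k - 1) = n.unpair.2 then 1 else 0))
      else 1 := by
  unfold checkFun
  simp only [Nat.unpair_pair, seqCode, listOf_encode, List.length_map, List.length_range]
  rcases Nat.eq_zero_or_pos k with hk | hk
  · simp [hk]
  · rw [getD_rangeMap Y (by omega)]

end NoHypAux

namespace NoHypAux

theorem side (z : ℕ → ℕ) (f : (ℕ → Bool) → ℕ → ℕ) (c : OCode)
    (hc : ∀ w : ℕ → ℕ,
      (∃ x : ℕ → Bool, w = join2 (fun n => cond (x n) 1 0) (f x)) ↔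
        ∃ y : ℕ → ℕ, ∀ k, c.eval z (Nat.pair (seqCode w k) (seqCode y k)) = Part.some 1)
    (b : Bool) (neg : Bool) :
    ∃ c' : OCode, ∀ n : ℕ,
      (if neg then f (fun _ => b) n.unpair.1 ≠ n.unpair.2
       else f (fun _ => b) n.unpair.1 = n.unpair.2) ↔
        ∃ Y : ℕ → ℕ, ∀ k, c'.eval z (Nat.pair n (seqCode Y k)) = Part.some 1 := by
  classical
  set e : ℕ := cond b 1 0 with he
  set x₀ : ℕ → Bool := fun _ => b with hx₀
  obtain ⟨c', hc'⟩ := combined_code c e neg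
  refine ⟨c', fun n => ?_⟩
  constructor
  · intro hP
    set w : ℕ → ℕ := join2 (fun _ => e) (f x₀) with hw
    have hwS : ∃ x : ℕ → Bool, w = join2 (fun n => cond (x n) 1 0) (f x) := ⟨x₀, rfl⟩
    obtain ⟨y, hy⟩ := (hc w).1 hwS
    refine ⟨join2 w y, fun k => ?_⟩
    have hYe : ∀ j, join2 w y (2 * j) = w j := join2_even w y
    have hYo : ∀ j, join2 w y (2 * j + 1) = y j := join2_odd w y
    rw [hc', prepFun_eq]
    have h1 : seqCode (fun j => join2 w y (2 * j)) (k / 2) = seqCode w (k / 2) := by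
      unfold seqCode; congr 1; exact List.map_congr_left fun j _ => hYe j
    have h2 : seqCode (fun j => join2 w y (2 * j + 1)) (k / 2) = seqCode y (k / 2) := by
      unfold seqCode; congr 1; exact List.map_congr_left fun j _ => hYo j
    rw [h1, h2, hy (k / 2), checkFun_eq]
    have hcheck1 : ∀ i, (i % 4 = 0) → join2 w y i = e := by
      intro i hi
      obtain ⟨j, rfl⟩ : ∃ j, i = 4 * j := ⟨i / 4, by omega⟩
      have : (4 : ℕ) * j = 2 * (2 * j) := by ring
      rw [this, hYe, hw, join2_even]
    have hcheck2 : join2 w y (4 * n.unpair.1 + 2) = f x₀ n.unpair.1 := by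
      have : (4 : ℕ) * n.unpair.1 + 2 = 2 * (2 * n.unpair.1 + 1) := by ring
      rw [this, hYe, hw, join2_odd]
    rcases Nat.eq_zero_or_pos k with hk | hk
    · simp [hk]
    rw [if_neg (by omega)]
    by_cases h4 : (k - 1) % 4 = 0
    · rw [if_pos h4, if_pos (hcheck1 _ h4)]; simp
    rw [if_neg h4]
    by_cases h42 : k - 1 = 4 * n.unpair.1 + 2
    · rw [if_pos h42, h42, hcheck2]
      cases neg with
      | false => simp only [if_false, Bool.false_eq_true] at hP ⊢; rw [if_pos hP]; simp
      | true => simp only [if_true] at hP ⊢; rw [if_neg hP]; simp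
    · rw [if_neg h42]; simp
  · rintro ⟨Y, hY⟩
    set w : ℕ → ℕ := fun j => Y (2 * j) with hw
    set y : ℕ → ℕ := fun j => Y (2 * j + 1) with hy
    have key : ∀ k, c.eval z (Nat.pair (seqCode w (k / 2)) (seqCode y (k / 2))) = Part.some 1
        ∧ checkFun e neg (Nat.pair n (seqCode Y k)) = 1 := by
      intro k
      have := hY k
      rw [hc' z, prepFun_eq] at this
      obtain ⟨v, hv, hmul⟩ := (Part.mem_map_iff _).1 (Part.eq_some_iff.1 this)
      have h1 := Nat.eq_one_of_mul_eq_one_right hmul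
      have h2 := Nat.eq_one_of_mul_eq_one_left hmul
      rw [h2] at hv
      exact ⟨Part.eq_some_iff.2 hv, h1⟩
    have hS : ∃ x : ℕ → Bool, w = join2 (fun n => cond (x n) 1 0) (f x) := by
      refine (hc w).2 ⟨y, fun t => ?_⟩
      have := (key (2 * t)).1
      rwa [Nat.mul_div_cancel_left t (by norm_num)] at this
    have hch : ∀ k, checkFun e neg (Nat.pair n (seqCode Y k)) = 1 := fun k => (key k).2
    have hevens : ∀ j, Y (4 * j) = e := by
      intro j
      have := hch (4 * j + 1)
      rw [checkFun_eq] at this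
      simp only [Nat.add_sub_cancel, Nat.mul_mod_right, if_pos rfl, if_neg (by omega : ¬ 4*j+1 = 0)] at this
      by_contra hne
      rw [if_neg hne] at this
      exact absurd this (by norm_num)
    obtain ⟨x, hx⟩ := hS
    have hxe : x = x₀ := by
      funext j
      have h1 : w (2 * j) = e := by
        show Y (2 * (2 * j)) = e
        rw [show 2 * (2 * j) = 4 * j by ring]; exact hevens j
      rw [hx, join2_even] at h1
      rw [hx₀]
      cases hb : b <;> cases hxj : x j <;> simp [he, hb, hxj] at h1 ⊢
    have hval : w (2 * n.unpair.1 + 1) = f x₀ n.unpair.1 := by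
      rw [hx, join2_odd, hxe]
    have hch2 := hch (4 * n.unpair.1 + 3)
    rw [checkFun_eq] at hch2
    rw [if_neg (by omega), if_neg (by omega), if_pos (by omega)] at hch2
    have ha : Y (4 * n.unpair.1 + 3 - 1) = f x₀ n.unpair.1 := by
      have h2 : Y (2 * (2 * n.unpair.1 + 1)) = f x₀ n.unpair.1 := hval
      rw [show 2 * (2 * n.unpair.1 + 1) = 4 * n.unpair.1 + 2 by ring] at h2
      rw [show 4 * n.unpair.1 + 3 - 1 = 4 * n.unpair.1 + 2 by omega]
      exact h2
    rw [ha] at hch2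
    cases neg with
    | false =>
      simp only [Bool.false_eq_true, if_false] at hch2 ⊢
      by_contra hne
      rw [if_neg hne] at hch2
      exact absurd hch2 (by norm_num)
    | true =>
      simp only [if_true] at hch2 ⊢
      intro heq
      rw [if_pos heq] at hch2
      exact absurd hch2 (by norm_num)

theorem hyp_of_code (z : ℕ → ℕ) (f : (ℕ → Bool) → ℕ → ℕ) (c : OCode)
    (hc : ∀ w : ℕ → ℕ,
      (∃ x : ℕ → Bool, w = join2 (fun n => cond (x n) 1 0) (f x)) ↔
        ∃ y : ℕ → ℕ, ∀ k, c.eval z (Nat.pair (seqCode w k) (seqCode y k)) = Part.some 1)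
    (b : Bool) : HypIn z (f (fun _ => b)) := by
  constructor
  · obtain ⟨c', hc'⟩ := side z f c hc b false
    exact ⟨c', fun n => by simpa [realGraph] using hc' n⟩
  · obtain ⟨c', hc'⟩ := side z f c hc b true
    exact ⟨c', fun n => by simpa [realGraph] using hc' n⟩

end NoHypAux

/-- If `F` is uncountable and no element of `F` is `Δ¹₁(z)`, then no `Δ¹₁(z)` function
reduces equality on `2^ω` to the equivalence relation `E` with classes `Fᶜ` and the
singletons of elements of `F`. -/
theorem no_hyp_in_z_reduction_of_equality
    (z : ℕ → ℕ) (F : Set (ℕ → ℕ)) (hF : ¬ F.Countable)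
    (hFnohyp : ∀ x ∈ F, ¬ HypIn z x) :
    ¬ ∃ f : (ℕ → Bool) → ℕ → ℕ, HypFunCIn z f ∧
      ∀ x y : ℕ → Bool, x = y ↔
        ((f x ∉ F ∧ f y ∉ F) ∨ (f x ∈ F ∧ f y ∈ F ∧ f x = f y)) := by
  rintro ⟨f, ⟨⟨c, hc⟩, -⟩, hred⟩
  have hc' : ∀ w : ℕ → ℕ,
      (∃ x : ℕ → Bool, w = join2 (fun n => cond (x n) 1 0) (f x)) ↔
        ∃ y : ℕ → ℕ, ∀ k, c.eval z (Nat.pair (seqCode w k) (seqCode y k)) = Part.some 1 :=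
    fun w => hc w
  have hne : (fun _ => false : ℕ → Bool) ≠ fun _ => true := by
    intro h
    exact absurd (congrFun h 0) (by simp)
  have hR := (hred (fun _ => false) (fun _ => true))
  have : f (fun _ => false) ∈ F ∨ f (fun _ => true) ∈ F := by
    by_contra h
    push_neg at h
    exact hne (hR.2 (Or.inl ⟨h.1, h.2⟩))
  rcases this with h | h
  · exact hFnohyp _ h (NoHypAux.hyp_of_code z f c hc' false)
  · exact hFnohyp _ h (NoHypAux.hyp_of_code z f c hc' true)
end
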